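/- arXiv:2003.11322 — 6 statements merged into one kernel-verified Lean document; each statement's English description precedes it below -/
import Mathlib

section
/- If n > 1 and L is a positive definite integral lattice whose n-exceptional set E_n(L) is finite, then L is (n−1)-universal, i.e., L represents every positive definite integral lattice of rank n−1. -/
open Matrix

/-- Square integer matrices of size `n`, used as Gram matrices of lattices. -/
abbrev Mat (n : ℕ) := Matrix (Fin n) (Fin n) ℤ

/-- `G` is the Gram matrix of a positive definite integral lattice:
it is symmetric and `vᵀ G v > 0` for every nonzero integer vector `v`. -/
def PosDefInt {n : ℕ} (G : Mat n) : Prop :=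
  G.IsSymm ∧ ∀ v : Fin n → ℤ, v ≠ 0 → 0 < v ⬝ᵥ G.mulVec v

/-- The lattice with Gram matrix `L` represents the lattice with Gram matrix `N`:
there is an integral matrix `T` (whose rows are the coordinates of the images of
the basis vectors) with `T L Tᵀ = N`. -/
def Represents {m n : ℕ} (L : Mat m) (N : Mat n) : Prop :=
  ∃ T : Matrix (Fin n) (Fin m) ℤ, T * L * T.transpose = N

/-- Isometry of (positive definite) lattices, expressed as mutual representation. -/
def Isom {m n : ℕ} (A : Mat m) (B : Mat n) : Prop :=
  Represents A B ∧ Represents B A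

theorem Represents.rfl' {n : ℕ} (A : Mat n) : Represents A A :=
  ⟨1, by simp⟩

theorem Represents.trans' {a b c : ℕ} {A : Mat a} {B : Mat b} {C : Mat c}
    (h1 : Represents A B) (h2 : Represents B C) : Represents A C := by
  obtain ⟨T1, h1⟩ := h1
  obtain ⟨T2, h2⟩ := h2
  refine ⟨T2 * T1, ?_⟩
  rw [← h2, ← h1]
  simp [Matrix.mul_assoc, Matrix.transpose_mul]

/-- A positive definite integral lattice of rank `n`, given by a Gram matrix. -/
def QLat (n : ℕ) := {G : Mat n // PosDefInt G}

instance latSetoid (n : ℕ) : Setoid (QLat n) where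
  r A B := Isom A.1 B.1
  iseqv := ⟨fun A => ⟨Represents.rfl' _, Represents.rfl' _⟩,
    fun h => ⟨h.2, h.1⟩,
    fun h1 h2 => ⟨h1.1.trans' h2.1, h2.2.trans' h1.2⟩⟩

/-- Isometry classes of positive definite integral lattices of rank `n` (`Φ_n`). -/
def Cls (n : ℕ) := Quotient (latSetoid n)

/-- The isometry class of a lattice. -/
def cls {n : ℕ} (L : QLat n) : Cls n := Quotient.mk _ L

/-- A lattice represents an isometry class. -/
def RepCls {m n : ℕ} (L : QLat m) (c : Cls n) : Prop :=
  ∃ N : QLat n, cls N = c ∧ Represents L.1 N.1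

/-- The `n`-exceptional set of `L`: the classes of rank-`n` positive definite
integral lattices not represented by `L`. -/
def ExcSet (n : ℕ) {m : ℕ} (L : QLat m) : Set (Cls n) :=
  {c : Cls n | ¬ RepCls L c}

lemma aux_dot_self_nonneg {k : Type*} [Fintype k] (w : k → ℤ) : 0 ≤ w ⬝ᵥ w :=
  Finset.sum_nonneg fun i _ => mul_self_nonneg _

lemma aux_dot_self_pos {k : Type*} [Fintype k] (w : k → ℤ) (hw : w ≠ 0) : 0 < w ⬝ᵥ w := by
  rcases (aux_dot_self_nonneg w).lt_or_eq with h | h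
  · exact h
  · exfalso
    apply hw
    ext i
    have := Finset.sum_eq_zero_iff_of_nonneg (fun i _ => mul_self_nonneg (w i)) |>.1 h.symm i
      (Finset.mem_univ i)
    exact mul_self_eq_zero.1 this

lemma aux_rep_submatrix {a b : ℕ} (A : Mat b) (g : Fin a → Fin b) :
    Represents A (A.submatrix g g) := by
  refine ⟨Matrix.of fun i j => if g i = j then 1 else 0, ?_⟩
  ext i j
  simp [Matrix.mul_apply, Matrix.submatrix_apply, mul_ite, ite_mul, Finset.sum_ite_eq]

lemma aux_det_ne_zero {n : ℕ} {G : Mat n} (h : PosDefInt G) : G.det ≠ 0 := by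
  intro hd
  obtain ⟨v, hv, hv0⟩ := Matrix.exists_mulVec_eq_zero_iff.2 hd
  have := h.2 v hv
  rw [hv0] at this
  simp at this

lemma aux_isom_det {m n : ℕ} {A : Mat m} {B : Mat n} (h : Isom A B) (hmn : m = n) :
    A.det = B.det := by
  subst hmn
  obtain ⟨⟨T, hT⟩, ⟨S, hS⟩⟩ := h
  have h1 : B.det = T.det ^ 2 * A.det := by rw [← hT]; simp [Matrix.det_mul, sq]; ring
  have h2 : A.det = S.det ^ 2 * B.det := by rw [← hS]; simp [Matrix.det_mul, sq]; ring
  by_cases hA : A.det = 0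
  · rw [hA] at h1 ⊢; omega
  · have hkey : S.det ^ 2 * T.det ^ 2 = 1 := by
      have h4 : A.det = (S.det ^ 2 * T.det ^ 2) * A.det := by
        nth_rewrite 1 [h2]
        rw [h1]; ring
      have h3 : (S.det ^ 2 * T.det ^ 2) * A.det = 1 * A.det := by rw [one_mul]; exact h4.symm
      exact mul_right_cancel₀ hA h3
    have hT2 : T.det ^ 2 = 1 :=
      Int.eq_one_of_mul_eq_one_right (sq_nonneg T.det) (by rw [mul_comm] at hkey; exact hkey)
    rw [h1, hT2, one_mul]


/-- If `n > 1` and the `n`-exceptional set of `L` is finite, then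
`L` is `(n-1)`-universal: it represents every positive definite integral lattice
of rank `n - 1`. -/
theorem finite_exceptional_implies_universal (n : ℕ) (hn : 1 < n) (r : ℕ) (L : QLat r)
    (h : (ExcSet n L).Finite) :
    ∀ N : QLat (n - 1), Represents L.1 N.1 := by
  intro N
  have hm : (n - 1) + 1 = n := by omega
  let e : (Fin (n - 1) ⊕ Fin 1) ≃ Fin n := finSumFinEquiv.trans (finCongr hm)
  -- the block matrices N ⊥ ⟨ℓ+1⟩
  let G : ℕ → Matrix (Fin (n-1) ⊕ Fin 1) (Fin (n-1) ⊕ Fin 1) ℤ :=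
    fun ℓ => Matrix.fromBlocks N.1 0 0 (((ℓ:ℤ)+1) • 1)
  let Mm : ℕ → Mat n := fun ℓ => (G ℓ).submatrix e.symm e.symm
  -- symmetry of G ℓ
  have hGsymm : ∀ ℓ, (G ℓ).transpose = G ℓ := by
    intro ℓ
    show (Matrix.fromBlocks N.1 0 0 (((ℓ:ℤ)+1) • 1)).transpose = _
    rw [Matrix.fromBlocks_transpose, (N.2.1 : (N.1)ᵀ = N.1), Matrix.transpose_zero, Matrix.transpose_zero,
      Matrix.transpose_smul, Matrix.transpose_one]
  -- positive definiteness of G ℓ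
  have hGpos : ∀ ℓ (v : Fin (n-1) ⊕ Fin 1 → ℤ), v ≠ 0 → 0 < v ⬝ᵥ (G ℓ).mulVec v := by
    intro ℓ v hv
    have hdecomp : v = Sum.elim (v ∘ Sum.inl) (v ∘ Sum.inr) := by
      ext x; cases x <;> rfl
    rw [hdecomp]
    show 0 < _ ⬝ᵥ (Matrix.fromBlocks N.1 0 0 (((ℓ:ℤ)+1) • 1)).mulVec _
    rw [Matrix.fromBlocks_mulVec, sumElim_dotProduct_sumElim]
    simp only [Matrix.zero_mulVec, add_zero, zero_add, Sum.elim_comp_inl, Sum.elim_comp_inr]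
    have h2 : (v ∘ Sum.inr) ⬝ᵥ ((((ℓ:ℤ)+1) • 1 : Matrix (Fin 1) (Fin 1) ℤ).mulVec (v ∘ Sum.inr))
        = ((ℓ:ℤ)+1) * ((v ∘ Sum.inr) ⬝ᵥ (v ∘ Sum.inr)) := by
      rw [Matrix.smul_mulVec, Matrix.one_mulVec, dotProduct_smul]
      simp [mul_comm]
    rw [h2]
    by_cases h1 : (v ∘ Sum.inl) = 0
    · have h2' : (v ∘ Sum.inr) ≠ 0 := by
        intro h2'
        apply hv
        ext x
        cases x with
        | inl a => exact congrFun h1 a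
        | inr a => exact congrFun h2' a
      rw [h1]
      simp only [zero_dotProduct]
      have hp : (0:ℤ) < (ℓ:ℤ)+1 := by positivity
      have := mul_pos hp (aux_dot_self_pos _ h2')
      omega
    · have ha := N.2.2 _ h1
      have h2nn : 0 ≤ ((ℓ:ℤ)+1) * ((v ∘ Sum.inr) ⬝ᵥ (v ∘ Sum.inr)) := by
        have hp : (0:ℤ) ≤ (ℓ:ℤ)+1 := by positivity
        exact mul_nonneg hp (aux_dot_self_nonneg _)
      omega
  -- the lattices Q ℓ
  have hMpos : ∀ ℓ, PosDefInt (Mm ℓ) := by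
    intro ℓ
    constructor
    · show (Mm ℓ).transpose = Mm ℓ
      show ((G ℓ).submatrix e.symm e.symm).transpose = _
      rw [Matrix.transpose_submatrix, hGsymm]
    · intro v hv
      show 0 < v ⬝ᵥ ((G ℓ).submatrix ⇑e.symm ⇑e.symm).mulVec v
      rw [Matrix.submatrix_mulVec_equiv]
      have hrw : v ⬝ᵥ ((G ℓ).mulVec (v ∘ ⇑e.symm.symm)) ∘ ⇑e.symm
          = (v ∘ e.symm.symm) ⬝ᵥ (G ℓ).mulVec (v ∘ e.symm.symm) := by
        exact Fintype.sum_equiv e.symm _ _ (fun i => by simp)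
      rw [hrw]
      apply hGpos
      intro hc
      apply hv
      ext i
      have := congrFun hc (e.symm i)
      simpa using this
  let Q : ℕ → QLat n := fun ℓ => ⟨Mm ℓ, hMpos ℓ⟩
  -- determinants
  have hdet : ∀ ℓ, (Q ℓ).1.det = ((ℓ:ℤ)+1) * N.1.det := by
    intro ℓ
    show ((G ℓ).submatrix ⇑e.symm ⇑e.symm).det = _
    rw [Matrix.det_submatrix_equiv_self]
    show (Matrix.fromBlocks N.1 0 0 (((ℓ:ℤ)+1) • 1)).det = _
    rw [Matrix.det_fromBlocks_zero₂₁]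
    rw [mul_comm]
    congr 1
    rw [Matrix.det_fin_one]
    simp
  -- injectivity of the classes
  have hinj : Function.Injective (fun ℓ => cls (Q ℓ)) := by
    intro a b hab
    have hisom : Isom (Q a).1 (Q b).1 := Quotient.exact hab
    have := aux_isom_det hisom rfl
    rw [hdet a, hdet b] at this
    have hdN := aux_det_ne_zero N.2
    have : ((a:ℤ)+1) = ((b:ℤ)+1) := mul_right_cancel₀ hdN this
    omega
  -- some class is represented
  have hnotsub : ¬ (Set.range (fun ℓ => cls (Q ℓ)) ⊆ ExcSet n L) := by
    intro hsub
    exact (Set.infinite_range_of_injective hinj) (h.subset hsub)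
  rw [Set.not_subset] at hnotsub
  obtain ⟨c, ⟨ℓ, hcℓ⟩, hc⟩ := hnotsub
  have hrep : RepCls L c := not_not.1 hc
  obtain ⟨N', hcls, hLN'⟩ := hrep
  rw [← hcℓ] at hcls
  have hisom : Isom N'.1 (Q ℓ).1 := Quotient.exact hcls
  -- (Q ℓ) represents N
  have hproj : Represents (Q ℓ).1 N.1 := by
    have := aux_rep_submatrix (Q ℓ).1 (fun i => e (Sum.inl i))
    have heq : ((Q ℓ).1).submatrix (fun i => e (Sum.inl i)) (fun i => e (Sum.inl i)) = N.1 := by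
      ext i j
      show (G ℓ) (e.symm (e (Sum.inl i))) (e.symm (e (Sum.inl j))) = N.1 i j
      rw [Equiv.symm_apply_apply, Equiv.symm_apply_apply]
      rfl
    rwa [heq] at this
  exact (hLN'.trans' hisom.1).trans' hproj
end

section
/- Let L be a positive definite integral lattice of squarefree discriminant d. Then for any vector v in the dual lattice L^# that is not in L, Q(v) lies in (1/d)ℤ but not in ℤ. -/
/-! For `v ∈ L^#` the vector `d v = adj(G) (G v)` is integral, whence `d Q(v) ∈ ℤ`. If moreover
`Q(v) ∈ ℤ`, then replacing the `i`-th basis vector by `v` gives vectors with integral Gram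
matrix `U G Uᵀ`, of determinant `v_i² d`. Hence `d v_i² ∈ ℤ`, which for squarefree `d` forces
`v_i ∈ ℤ`. -/

open Matrix

/-- The quadratic form of the lattice with Gram matrix `G`, evaluated on a rational
coordinate vector. -/
def QformQ {n : ℕ} (G : Mat n) (v : Fin n → ℚ) : ℚ :=
  v ⬝ᵥ (G.map (Int.cast : ℤ → ℚ)).mulVec v

/-- `v` (a rational coordinate vector) lies in the dual lattice `L^#`:
its inner product with every lattice vector is an integer. -/
def InDual {n : ℕ} (G : Mat n) (v : Fin n → ℚ) : Prop :=
  ∀ i, ∃ m : ℤ, (G.map (Int.cast : ℤ → ℚ)).mulVec v i = m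

theorem Squarefree.exists_int_eq_of_mul_sq {d : ℤ} (hd : Squarefree d) {r : ℚ}
    (h : ∃ m : ℤ, d * r ^ 2 = m) : ∃ m : ℤ, r = m := by
  obtain ⟨m, hm⟩ := h
  have hden_dvd : (r.den : ℤ) ^ 2 ∣ d * r.num ^ 2 := by
    refine ⟨m, ?_⟩
    have h := congrArg (· * (r.den : ℚ) ^ 2) hm
    simp only [← mul_pow, mul_assoc, Rat.mul_den_eq_num] at h
    exact_mod_cast h.trans (mul_comm _ _)
  have hcop : IsCoprime ((r.den : ℤ) ^ 2) (r.num ^ 2) :=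
    ((Int.isCoprime_iff_gcd_eq_one (m := r.den) (n := r.num)).mpr r.reduced.symm).pow
  have hunit : IsUnit (r.den : ℤ) :=
    hd _ (by simpa [sq] using hcop.dvd_of_dvd_mul_right hden_dvd)
  exact ⟨r.num, (Rat.coe_int_num_of_den_eq_one
    (by simpa using Int.isUnit_iff_natAbs_eq.mp hunit)).symm⟩

namespace Matrix

variable {ι R : Type*} [Fintype ι] [CommRing R]

theorem det_one_updateRow [DecidableEq ι] (i : ι) (u : ι → R) :
    ((1 : Matrix ι ι R).updateRow i u).det = u i := by
  have hu : ∑ k, u k • (1 : Matrix ι ι R) k = u := by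
    simpa using (vecMul_eq_sum u (1 : Matrix ι ι R)).symm
  simpa [hu] using det_updateRow_sum (1 : Matrix ι ι R) i u

theorem mul_mul_transpose_apply (U M : Matrix ι ι R) (j k : ι) :
    (U * M * Uᵀ) j k = U j ⬝ᵥ M *ᵥ U k := by
  rw [mul_apply', mul_apply_eq_vecMul, ← dotProduct_mulVec]
  rfl

theorem exists_det_eq_intCast [DecidableEq ι] {M : Matrix ι ι ℚ}
    (h : ∀ j k, ∃ m : ℤ, M j k = m) : ∃ m : ℤ, M.det = m := by
  choose H hH using h
  exact ⟨(of H).det, by rw [Int.cast_det]; congr; ext j k; exact hH j k⟩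

end Matrix

section InDual

variable {n : ℕ} {G : Mat n}

theorem inDual_single (k : Fin n) : InDual G (Pi.single k 1) := fun j =>
  ⟨G j k, by simp⟩

theorem InDual.exists_det_mul_eq_intCast {v : Fin n → ℚ} (hv : InDual G v) :
    ∃ x : Fin n → ℤ, ∀ i, (G.det : ℚ) * v i = x i := by
  choose w hw using hv
  refine ⟨G.adjugate *ᵥ w, fun i => ?_⟩
  have hGv : G.map (Int.cast : ℤ → ℚ) *ᵥ v = (↑) ∘ w := funext hw
  have hcast := (Int.castRingHom ℚ).map_mulVec G.adjugate w i
  rw [← RingHom.mapMatrix_apply, RingHom.map_adjugate] at hcast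
  calc (G.det : ℚ) * v i
      = ((G.map (Int.cast : ℤ → ℚ)).adjugate *ᵥ (G.map (Int.cast : ℤ → ℚ) *ᵥ v)) i := by
        rw [mulVec_mulVec, adjugate_mul, ← Int.cast_det, smul_mulVec, one_mulVec]
        rfl
    _ = _ := by rw [hGv]; exact hcast.symm

theorem InDual.exists_det_mul_qformQ_eq_intCast {v : Fin n → ℚ} (hv : InDual G v) :
    ∃ m : ℤ, (G.det : ℚ) * QformQ G v = m := by
  obtain ⟨x, hx⟩ := hv.exists_det_mul_eq_intCast
  choose w hw using hv
  refine ⟨x ⬝ᵥ w, ?_⟩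
  simp only [QformQ, dotProduct, Finset.mul_sum, ← mul_assoc, hx, hw]
  push_cast
  rfl

theorem InDual.exists_det_mul_sq_eq_intCast (hG : G.IsSymm) {u : Fin n → ℚ} (hu : InDual G u)
    (hQ : ∃ m : ℤ, QformQ G u = m) (i : Fin n) : ∃ m : ℤ, (G.det : ℚ) * u i ^ 2 = m := by
  set Gq := G.map (Int.cast : ℤ → ℚ)
  set U := (1 : Matrix (Fin n) (Fin n) ℚ).updateRow i u
  have hrow_ne : ∀ j, j ≠ i → U j = Pi.single j 1 := fun j hj => by
    ext k
    simp [U, updateRow_ne hj, one_eq_pi_single]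
  have hrow_dual : ∀ k, InDual G (U k) := fun k => by
    by_cases hk : k = i
    · simpa [U, hk] using hu
    · simpa [hrow_ne k hk] using inDual_single k
  have hgram_symm : (U * Gq * Uᵀ)ᵀ = U * Gq * Uᵀ := by
    simp [transpose_mul, Matrix.mul_assoc, (hG.map _).eq, Gq]
  have hgram_ne : ∀ j k, j ≠ i → ∃ m : ℤ, (U * Gq * Uᵀ) j k = m := fun j k hj => by
    rw [mul_mul_transpose_apply, hrow_ne j hj, single_dotProduct, one_mul]
    exact hrow_dual k j
  have hgram : ∀ j k, ∃ m : ℤ, (U * Gq * Uᵀ) j k = m := fun j k => by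
    by_cases hj : j = i
    · by_cases hk : k = i
      · rw [hj, hk, mul_mul_transpose_apply, show U i = u from updateRow_self]
        exact hQ
      · rw [← transpose_apply (U * Gq * Uᵀ), hgram_symm]
        exact hgram_ne k j hk
    · exact hgram_ne j k hj
  obtain ⟨m, hm⟩ := exists_det_eq_intCast hgram
  refine ⟨m, ?_⟩
  rw [← hm, det_mul, det_mul, det_transpose, det_one_updateRow, Int.cast_det]
  ring

end InDual

/-- If `L` is a positive definite integral lattice with squarefree
discriminant `d`, then for every `v ∈ L^# \\ L` we have `Q(v) ∈ (1/d)ℤ \\ ℤ`. -/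
theorem dual_norm_of_squarefree_disc (n : ℕ) (L : QLat n) (hd : Squarefree L.1.det)
    (v : Fin n → ℚ) (hv : InDual L.1 v) (hvL : ¬ ∀ i, ∃ m : ℤ, v i = m) :
    (∃ m : ℤ, (L.1.det : ℚ) * QformQ L.1 v = m) ∧ ¬ ∃ m : ℤ, QformQ L.1 v = m :=
  ⟨hv.exists_det_mul_qformQ_eq_intCast, fun hQ => hvL fun i =>
    hd.exists_int_eq_of_mul_sq (hv.exists_det_mul_sq_eq_intCast L.2.1 hQ i)⟩
end

section
/- For i with 0 ≤ i ≤ n and j = n+1−i, the glue vector [i] of A_n, having j coordinates equal to i/(n+1) followed by i coordinates equal to −j/(n+1), lies in the dual lattice A_n^#, and Q([i]) = ij/(n+1). Moreover [i] is a vector of minimal norm in its coset [i] + A_n of A_n^#/A_n. -/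
def AMem (n : ℕ) (x : Fin (n + 1) → ℚ) : Prop :=
  (∀ i, ∃ m : ℤ, x i = m) ∧ ∑ i, x i = 0

def glueA (n i : ℕ) : Fin (n + 1) → ℚ := fun k =>
  if (k : ℕ) < n + 1 - i then (i : ℚ) / (n + 1)
  else -(((n + 1 - i : ℕ) : ℚ)) / (n + 1)

/-!
Write `c = i/(n+1)`. Then `[i] = c·𝟙 - 𝟙_T`, where `T` is the set of the last `i` coordinates.
Pairing with `x ∈ A_n` kills `c·𝟙` and leaves `-∑_{k∈T} x_k ∈ ℤ`. Every `v ∈ [i] + A_n` has the form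
`c·𝟙 - M` with `M` integral and `∑ M = |T| = i`; since `M_k² ≥ M_k` for integers,
`‖c·𝟙 - M‖² = (n+1)c² - 2c∑M + ∑M_k² ≥ (n+1)c² + (1-2c)i`, with equality for `M = 𝟙_T`.
-/

open Finset

section ConstSubIndicator

variable {ι : Type*} [Fintype ι] [DecidableEq ι]

def constSubIndicator (c : ℚ) (s : Finset ι) (k : ι) : ℚ := c - if k ∈ s then 1 else 0

theorem sum_constSubIndicator (c : ℚ) (s : Finset ι) :
    ∑ k, constSubIndicator c s k = Fintype.card ι * c - #s := by
  simp [constSubIndicator, sum_sub_distrib, card_univ]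

theorem sum_constSubIndicator_mul (c : ℚ) (s : Finset ι) (x : ι → ℚ) :
    ∑ k, constSubIndicator c s k * x k = c * ∑ k, x k - ∑ k ∈ s, x k := by
  simp [constSubIndicator, sub_mul, sum_sub_distrib, mul_sum, ite_mul]

theorem sum_constSubIndicator_mul_self (c : ℚ) (s : Finset ι) :
    ∑ k, constSubIndicator c s k * constSubIndicator c s k =
      Fintype.card ι * (c * c) + (1 - 2 * c) * #s := by
  have hpt : ∀ k, constSubIndicator c s k * constSubIndicator c s k =
      c * c + (1 - 2 * c) * if k ∈ s then 1 else 0 := fun k => by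
    unfold constSubIndicator; split_ifs <;> ring
  rw [sum_congr rfl fun k _ => hpt k, sum_add_distrib, sum_const, ← mul_sum, sum_boole]
  simp

omit [DecidableEq ι] in
theorem card_mul_self_add_le_sum_sub_int_mul_self (c : ℚ) (M : ι → ℤ) :
    Fintype.card ι * (c * c) + (1 - 2 * c) * ∑ k, (M k : ℚ) ≤
      ∑ k, (c - M k) * (c - M k) := by
  calc _ = ∑ k, (c * c + (1 - 2 * c) * M k) := by
        rw [sum_add_distrib, sum_const, ← mul_sum, card_univ, nsmul_eq_mul]
    _ ≤ _ := sum_le_sum fun k _ => by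
        have : (M k : ℚ) ≤ M k * M k := by exact_mod_cast sq (M k) ▸ Int.le_self_sq (M k)
        nlinarith

theorem sum_constSubIndicator_mul_self_le (c : ℚ) (s : Finset ι) (v : ι → ℚ)
    (hint : ∀ k, ∃ m : ℤ, v k - constSubIndicator c s k = m)
    (hsum : ∑ k, (v k - constSubIndicator c s k) = 0) :
    ∑ k, constSubIndicator c s k * constSubIndicator c s k ≤ ∑ k, v k * v k := by
  choose m hm using hint
  set M : ι → ℤ := fun k => (if k ∈ s then 1 else 0) - m k
  have hv : ∀ k, v k = c - M k := fun k => by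
    have := hm k
    simp only [constSubIndicator, M] at this ⊢
    push_cast
    linarith
  have hM : ∑ k, (M k : ℚ) = #s := by
    simp only [hm] at hsum
    simp [M, sum_sub_distrib, hsum]
  calc _ = Fintype.card ι * (c * c) + (1 - 2 * c) * ∑ k, (M k : ℚ) := by
        rw [sum_constSubIndicator_mul_self, hM]
    _ ≤ ∑ k, (c - M k) * (c - M k) := card_mul_self_add_le_sum_sub_int_mul_self c M
    _ = ∑ k, v k * v k := by simp only [hv]

end ConstSubIndicator

def glueTail (n i : ℕ) : Finset (Fin (n + 1)) := {k | n + 1 - i ≤ (k : ℕ)}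

theorem card_glueTail {n i : ℕ} (hi : i ≤ n + 1) : #(glueTail n i) = i := by
  rw [glueTail, card_filter, Fin.sum_univ_eq_sum_range (fun k => if n + 1 - i ≤ k then 1 else 0),
    ← card_filter, range_eq_Ico, Ico_filter_le, Nat.card_Ico]
  omega

theorem glueA_eq_constSubIndicator {n i : ℕ} (hi : i ≤ n + 1) :
    glueA n i = constSubIndicator ((i : ℚ) / (n + 1)) (glueTail n i) := by
  ext k
  have hn : (n : ℚ) + 1 ≠ 0 := by positivity
  simp only [glueA, constSubIndicator, glueTail, mem_filter, mem_univ, true_and, Nat.cast_sub hi]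
  split_ifs with h₁ h₂ h₂
  · omega
  · ring
  · field_simp; push_cast; ring
  · omega

/-- For `0 ≤ i ≤ n` (with `j = n+1-i`), the glue vector `[i]` lies
in the dual lattice `A_n^#` (it is in the rational span of `A_n` and has integral
inner product with every vector of `A_n`), its norm is `Q([i]) = ij/(n+1)`, and it
has minimal norm in its coset `[i] + A_n`. -/
theorem glueA_props (n i : ℕ) (hi : i ≤ n) :
    (∑ k, glueA n i k = 0) ∧
    (∀ x, AMem n x → ∃ m : ℤ, ∑ k, glueA n i k * x k = m) ∧
    (∑ k, glueA n i k * glueA n i k = (i : ℚ) * ((n + 1 - i : ℕ) : ℚ) / (n + 1)) ∧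
    (∀ v : Fin (n + 1) → ℚ, AMem n (fun k => v k - glueA n i k) →
      ∑ k, glueA n i k * glueA n i k ≤ ∑ k, v k * v k) := by
  have hi' : i ≤ n + 1 := by omega
  have hn : (n : ℚ) + 1 ≠ 0 := by positivity
  rw [glueA_eq_constSubIndicator hi']
  refine ⟨?_, ?_, ?_, fun v hv => sum_constSubIndicator_mul_self_le _ _ v hv.1 hv.2⟩
  · rw [sum_constSubIndicator, card_glueTail hi', Fintype.card_fin]
    push_cast
    field_simp
    ring
  · rintro x ⟨hint, hsum⟩
    choose m hm using hint
    refine ⟨-∑ k ∈ glueTail n i, m k, ?_⟩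
    rw [sum_constSubIndicator_mul, hsum]
    simp [hm]
  · rw [sum_constSubIndicator_mul_self, card_glueTail hi', Fintype.card_fin, Nat.cast_sub hi']
    push_cast
    field_simp
    ring
end

section
/- Every integral lattice representing A₂ is isometric (in its rank-3 overlattice structure containing A₂ of codimension ≤ 1) to either A₂ ⊥ ⟨a⟩ or to the lattice with Gram matrix [[2,−1,0],[−1,2,−1],[0,−1,a]] (which equals (A₂ ⊥ ℤz) + ℤ([1] + z/3) with Q(z) = 9a−6) for a suitable positive integer a; moreover these lattices are mutually non-isometric, distinguished by discriminant (3a versus 3a−2 respectively). -/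
open Matrix

/-- Gram matrix of the orthogonal sum of two lattices. -/
def sumGram {a b : ℕ} (A : Mat a) (B : Mat b) : Mat (a + b) :=
  Matrix.reindex finSumFinEquiv finSumFinEquiv (Matrix.fromBlocks A 0 0 B)

/-- Gram matrix of the root lattice `A_n` with respect to the simple roots
`α_j = e_{j-1} - e_j`. -/
def Agram (n : ℕ) : Mat n :=
  Matrix.of fun i j =>
    if i = j then 2
    else if (i : ℕ) + 1 = (j : ℕ) ∨ (j : ℕ) + 1 = (i : ℕ) then -1
    else 0

/-- Gram matrix of the lattice `(A_n ⊥ ℤz) + ℤ([i] + z/(n+1))`, where `Q(z) = k(n+1)`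
and `q = (i(n+1-i) + k)/(n+1)` is the norm of the glued vector `[i] + z/(n+1)`:
the Cartan matrix of `A_n` bordered by the row/column `B(α_j, [i]) = δ_{j, n+1-i}`
with corner entry `q`. -/
def AGlue (n i : ℕ) (q : ℤ) : Mat (n + 1) :=
  Matrix.of fun r c =>
    if hr : (r : ℕ) < n then
      if hc : (c : ℕ) < n then Agram n ⟨r, hr⟩ ⟨c, hc⟩
      else if (r : ℕ) = n - i then 1 else 0
    else
      if hc : (c : ℕ) < n then (if (c : ℕ) = n - i then 1 else 0)
      else q


/-!
An embedding of `A₂` into a rank-3 integral lattice `L` is primitive: if `(c₀α₁ + c₁α₂)/p`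
lay in `L` for a prime `p ∤ (c₀, c₁)`, its inner products with `α₁, α₂` and its norm would be
integral, which forces `p ∣ c₀, c₁` because `disc A₂ = 3` is squarefree. So the roots
`α₁, α₂` extend to a basis `α₁, α₂, w` of `L`. Replacing `w` by `w + c₀α₁ + c₁α₂` moves
`(B(α₁,w), B(α₂,w))` by the image of `A₂` in `ℤ²`, a sublattice of index 3, and leaves one
of the Gram matrices `A₂ ⊥ ⟨a⟩` or `[[2,-1,0],[-1,2,-1],[0,-1,a]]`. Their determinants
`3a` and `3a - 2` are isometry invariants and separate them.
-/

theorem Matrix.IsSymm.mul_mul_transpose {m n : ℕ} {G : Mat n} (hG : G.IsSymm)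
    (E : Matrix (Fin m) (Fin n) ℤ) : (E * G * Eᵀ).IsSymm := by
  rw [IsSymm, transpose_mul, transpose_mul, transpose_transpose, hG.eq, Matrix.mul_assoc]

theorem mul_mul_transpose_apply {m m' n : ℕ} (A : Matrix (Fin m) (Fin n) ℤ) (G : Mat n)
    (B : Matrix (Fin m') (Fin n) ℤ) (i : Fin m) (j : Fin m') :
    (A * G * Bᵀ) i j = A i ⬝ᵥ G *ᵥ B j := by
  rw [mul_apply', dotProduct_mulVec]
  rfl

def SLCongr {n : ℕ} (G N : Mat n) : Prop :=
  ∃ E : Mat n, E.det = 1 ∧ E * G * Eᵀ = N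

namespace SLCongr

variable {n : ℕ} {G N P : Mat n}

theorem trans (h₁ : SLCongr G N) (h₂ : SLCongr N P) : SLCongr G P := by
  obtain ⟨E, hE, rfl⟩ := h₁
  obtain ⟨F, hF, rfl⟩ := h₂
  exact ⟨F * E, by rw [det_mul, hE, hF, one_mul], by
    simp only [transpose_mul, Matrix.mul_assoc]⟩

theorem isom (h : SLCongr G N) : Isom G N := by
  obtain ⟨E, hE, rfl⟩ := h
  have hinv : E⁻¹ * E = 1 := Matrix.nonsing_inv_mul E (by simp [hE])
  refine ⟨⟨E, rfl⟩, E⁻¹, ?_⟩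
  calc E⁻¹ * (E * G * Eᵀ) * E⁻¹ᵀ = (E⁻¹ * E) * G * (E⁻¹ * E)ᵀ := by
        simp only [transpose_mul, Matrix.mul_assoc]
    _ = G := by rw [hinv, transpose_one, Matrix.one_mul, Matrix.mul_one]

theorem posDefInt (h : SLCongr G N) (hG : PosDefInt G) : PosDefInt N := by
  obtain ⟨E, hE, rfl⟩ := h
  refine ⟨?_, fun v hv => ?_⟩
  · exact hG.1.mul_mul_transpose E
  · have hv' : Eᵀ *ᵥ v ≠ 0 := fun h0 =>
      hv (eq_zero_of_mulVec_eq_zero (by simp [hE]) h0)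
    rw [← mulVec_mulVec, ← mulVec_mulVec, dotProduct_mulVec, ← mulVec_transpose]
    exact hG.2 _ hv'

end SLCongr

theorem PosDefInt.diag_pos {n : ℕ} {G : Mat n} (hG : PosDefInt G) (i : Fin n) : 0 < G i i := by
  simpa using hG.2 (Pi.single i 1) (by simp)

theorem Represents.det_eq {m : ℕ} {A B : Mat m} (h : Represents A B) :
    ∃ d : ℤ, B.det = d ^ 2 * A.det := by
  obtain ⟨T, rfl⟩ := h
  exact ⟨T.det, by rw [det_mul, det_mul, det_transpose]; ring⟩

theorem Isom.det_eq {m : ℕ} {A B : Mat m} (h : Isom A B) (hA : A.det ≠ 0) : A.det = B.det := by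
  obtain ⟨d, hd⟩ := h.1.det_eq
  obtain ⟨e, he⟩ := h.2.det_eq
  have hde : d ^ 2 * e ^ 2 = 1 := by
    apply mul_right_cancel₀ hA
    linear_combination (-e ^ 2) * hd - he
  rcases Int.eq_one_or_neg_one_of_mul_eq_one hde with h1 | h1
  · rw [hd, h1, one_mul]
  · linarith [sq_nonneg d]

theorem exists_vecMul_dvd_of_dvd_minors {n : ℕ} {p : ℤ} (hp : Prime p)
    (T : Matrix (Fin 2) (Fin n) ℤ) (h : ∀ i j, p ∣ T 0 i * T 1 j - T 0 j * T 1 i) :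
    ∃ c : Fin 2 → ℤ, (¬ ∀ k, p ∣ c k) ∧ ∀ j, p ∣ (c ᵥ* T) j := by
  by_cases hT : ∀ j, p ∣ T 0 j
  · refine ⟨![1, 0], fun hc => hp.not_dvd_one (hc 0), fun j => ?_⟩
    simpa [vecMul, dotProduct, Fin.sum_univ_two] using hT j
  · obtain ⟨k, hk⟩ := not_forall.mp hT
    refine ⟨![T 1 k, -T 0 k], fun hc => hk (dvd_neg.mp (hc 1)), fun j => ?_⟩
    have hj : (![T 1 k, -T 0 k] ᵥ* T) j = -(T 0 k * T 1 j - T 0 j * T 1 k) := by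
      simp [vecMul, dotProduct, Fin.sum_univ_two]
      ring
    rw [hj]
    exact (h k j).neg_right

theorem dvd_minors_of_dvd_cross {p : ℤ} (u v : Fin 3 → ℤ) (h : ∀ k, p ∣ (u ⨯₃ v) k) :
    ∀ i j, p ∣ u i * v j - u j * v i := by
  have h0 := h 0; have h1 := h 1; have h2 := h 2
  simp only [cross_apply, Fin.isValue, cons_val] at h0 h1 h2
  intro i j
  fin_cases i <;> fin_cases j <;> simp only [sub_self, dvd_zero, Fin.zero_eta, Fin.mk_one,
    Fin.reduceFinMk] <;> first | assumption | (rw [← dvd_neg, neg_sub]; assumption)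

theorem dvd_gram_of_dvd_vecMul {m n : ℕ} {p : ℤ} (G : Mat n) (T : Matrix (Fin m) (Fin n) ℤ)
    (c : Fin m → ℤ) (hc : ∀ j, p ∣ (c ᵥ* T) j) :
    (∀ i, p ∣ (c ᵥ* (T * G * Tᵀ)) i) ∧ p * p ∣ c ⬝ᵥ (T * G * Tᵀ) *ᵥ c := by
  choose w hw using hc
  have hcT : c ᵥ* T = p • w := funext hw
  refine ⟨fun i => ⟨(w ᵥ* G ᵥ* Tᵀ) i, ?_⟩, ⟨w ⬝ᵥ G *ᵥ w, ?_⟩⟩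
  · rw [← vecMul_vecMul, ← vecMul_vecMul, hcT, smul_vecMul, smul_vecMul]
    rfl
  · rw [← mulVec_mulVec, ← mulVec_mulVec, dotProduct_mulVec, mulVec_transpose, hcT,
      mulVec_smul, smul_dotProduct, dotProduct_smul, smul_smul]
    rfl

theorem three_dvd_of_dvd_A2 {x y : ℤ} (hlin : 3 ∣ 2 * x - y)
    (hquad : 9 ∣ 2 * x ^ 2 - 2 * x * y + 2 * y ^ 2) : 3 ∣ x ∧ 3 ∣ y := by
  obtain ⟨k, hk⟩ := hlin
  obtain ⟨m, hm⟩ := hquad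
  obtain rfl : y = 2 * x - 3 * k := by linarith
  have h2x : (3 : ℤ) ∣ 2 * x ^ 2 := ⟨m + 2 * x * k - 2 * k ^ 2, by linarith⟩
  have hx : 3 ∣ x :=
    Int.prime_three.dvd_of_dvd_pow ((Int.prime_three.dvd_or_dvd h2x).resolve_left (by decide))
  exact ⟨hx, dvd_sub (hx.mul_left 2) (dvd_mul_right 3 k)⟩

theorem dvd_of_dvd_vecMul_Agram_two {p : ℤ} (hp : Prime p) (c : Fin 2 → ℤ)
    (hlin : ∀ i, p ∣ (c ᵥ* Agram 2) i) (hquad : p * p ∣ c ⬝ᵥ Agram 2 *ᵥ c) :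
    ∀ i, p ∣ c i := by
  have h0 : p ∣ 2 * c 0 - c 1 := by
    simpa [Agram, vecMul, dotProduct, Fin.sum_univ_two, sub_eq_add_neg, mul_comm] using hlin 0
  have h1 : p ∣ 2 * c 1 - c 0 := by
    simpa [Agram, vecMul, dotProduct, Fin.sum_univ_two, sub_eq_add_neg, add_comm, mul_comm]
      using hlin 1
  have hq : c ⬝ᵥ Agram 2 *ᵥ c = 2 * c 0 ^ 2 - 2 * c 0 * c 1 + 2 * c 1 ^ 2 := by
    simp [Agram, mulVec, dotProduct, Fin.sum_univ_two]
    ring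
  rw [hq] at hquad
  rw [Fin.forall_fin_two]
  by_cases hp3 : p ∣ 3
  · have habs : p.natAbs = 3 := by
      rcases (Nat.dvd_prime Nat.prime_three).mp (Int.natAbs_dvd_natAbs.mpr hp3) with h | h
      · exact absurd (Int.isUnit_iff_natAbs_eq.mpr h) hp.not_isUnit
      · exact h
    rw [← Int.natAbs_dvd, habs] at h0
    rw [← Int.natAbs_mul_self', habs] at hquad
    rw [← Int.natAbs_dvd (b := c 0), ← Int.natAbs_dvd (b := c 1), habs]
    exact three_dvd_of_dvd_A2 h0 hquad
  · have h30 : p ∣ 3 * c 0 := by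
      rw [show 3 * c 0 = 2 * (2 * c 0 - c 1) + (2 * c 1 - c 0) by ring]
      exact dvd_add (dvd_mul_of_dvd_right h0 2) h1
    have h31 : p ∣ 3 * c 1 := by
      rw [show 3 * c 1 = (2 * c 0 - c 1) + 2 * (2 * c 1 - c 0) by ring]
      exact dvd_add h0 (dvd_mul_of_dvd_right h1 2)
    exact ⟨(hp.dvd_or_dvd h30).resolve_left hp3, (hp.dvd_or_dvd h31).resolve_left hp3⟩

theorem not_forall_prime_dvd_cross_of_gram_eq_Agram_two {G : Mat 3}
    {T : Matrix (Fin 2) (Fin 3) ℤ} (hT : T * G * Tᵀ = Agram 2) {p : ℤ} (hp : Prime p) :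
    ¬ ∀ k, p ∣ (T 0 ⨯₃ T 1) k := by
  intro h
  obtain ⟨c, hc, hcT⟩ := exists_vecMul_dvd_of_dvd_minors hp T (dvd_minors_of_dvd_cross _ _ h)
  obtain ⟨hlin, hquad⟩ := dvd_gram_of_dvd_vecMul G T c hcT
  rw [hT] at hlin hquad
  exact hc (dvd_of_dvd_vecMul_Agram_two hp c hlin hquad)

theorem exists_dotProduct_eq_one {ι : Type*} [Fintype ι] (m : ι → ℤ)
    (h : ∀ p : ℤ, Prime p → ¬ ∀ i, p ∣ m i) : ∃ x : ι → ℤ, x ⬝ᵥ m = 1 := by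
  have hspan : Ideal.span (Set.range m) = ⊤ := by
    obtain ⟨g, hg⟩ := Submodule.IsPrincipal.principal (Ideal.span (Set.range m))
    have hgm : ∀ i, g ∣ m i := fun i => by
      have hi : m i ∈ Ideal.span (Set.range m) := Ideal.subset_span ⟨i, rfl⟩
      rwa [hg, Ideal.submodule_span_eq, Ideal.mem_span_singleton] at hi
    rw [hg, Ideal.submodule_span_eq, Ideal.span_singleton_eq_top, Int.isUnit_iff_natAbs_eq]
    by_contra hg1
    obtain ⟨p, hp, hpg⟩ := Int.exists_prime_and_dvd hg1
    exact h p hp fun i => hpg.trans (hgm i)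
  obtain ⟨x, hx⟩ := (Submodule.mem_span_range_iff_exists_fun ℤ).mp
    (hspan ▸ Submodule.mem_top : (1 : ℤ) ∈ Ideal.span (Set.range m))
  exact ⟨x, by simpa [dotProduct] using hx⟩

/-- `A₂` extended by a vector `w` with `B(α₁, w) = p`, `B(α₂, w) = q`, `Q(w) = r`. -/
def bordA2 (p q r : ℤ) : Mat 3 := !![2, -1, p; -1, 2, q; p, q, r]

theorem det_bordA2 (p q r : ℤ) : (bordA2 p q r).det = 3 * r - 2 * (p ^ 2 + p * q + q ^ 2) := by
  rw [bordA2, det_fin_three]; simp; ring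

theorem sumGram_A2 (a : ℤ) :
    sumGram (Agram 2) (Matrix.of fun _ _ : Fin 1 => a) = bordA2 0 0 a := by
  ext i j
  fin_cases i <;> fin_cases j <;> rfl

theorem exists_slCongr_bordA2 {G : Mat 3} (hG : G.IsSymm) (h : Represents G (Agram 2)) :
    ∃ p q r, SLCongr G (bordA2 p q r) := by
  obtain ⟨T, hT⟩ := h
  obtain ⟨x, hx⟩ := exists_dotProduct_eq_one _ fun p hp =>
    not_forall_prime_dvd_cross_of_gram_eq_Agram_two hT hp
  let U : Mat 3 := ![T 0, T 1, x]
  have hU : U.det = 1 := by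
    rw [← hx, triple_product_permutation, triple_product_eq_det]
  have hA2 : ∀ i j : Fin 2, (U * G * Uᵀ) i.castSucc j.castSucc = Agram 2 i j := by
    intro i j
    rw [← hT, mul_mul_transpose_apply, mul_mul_transpose_apply]
    fin_cases i <;> fin_cases j <;> rfl
  have hsymm := (hG.mul_mul_transpose U).apply
  have h00 : (U * G * Uᵀ) 0 0 = 2 := hA2 0 0
  have h01 : (U * G * Uᵀ) 0 1 = -1 := hA2 0 1
  have h10 : (U * G * Uᵀ) 1 0 = -1 := hA2 1 0
  have h11 : (U * G * Uᵀ) 1 1 = 2 := hA2 1 1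
  refine ⟨(U * G * Uᵀ) 0 2, (U * G * Uᵀ) 1 2, (U * G * Uᵀ) 2 2, U, hU, ?_⟩
  rw [eta_fin_three (U * G * Uᵀ), h00, h01, h10, h11, hsymm 0 2, hsymm 1 2]
  rfl

theorem bordA2_slCongr_of_shift {p q r p' q' : ℤ} (s c₀ c₁ : ℤ) (hs : s = 1 ∨ s = -1)
    (hp : s * (p + 2 * c₀ - c₁) = p') (hq : s * (q - c₀ + 2 * c₁) = q') :
    SLCongr (bordA2 p q r)
      (bordA2 p' q' (r + 2 * c₀ * p + 2 * c₁ * q + 2 * (c₀ ^ 2 - c₀ * c₁ + c₁ ^ 2))) := by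
  subst hp hq
  refine ⟨!![s, 0, 0; 0, s, 0; c₀, c₁, 1], ?_, ?_⟩
  · rw [det_fin_three]; rcases hs with rfl | rfl <;> simp
  · ext i j
    rcases hs with rfl | rfl <;> fin_cases i <;> fin_cases j <;>
      simp [bordA2, Matrix.mul_apply, Fin.sum_univ_three] <;> ring

theorem bordA2_slCongr_normalForm (p q r : ℤ) :
    ∃ a, SLCongr (bordA2 p q r) (bordA2 0 0 a) ∨ SLCongr (bordA2 p q r) (bordA2 0 (-1) a) := by
  rcases (by omega : (p - q) % 3 = 0 ∨ (p - q) % 3 = 1 ∨ (p - q) % 3 = 2) with h | h | h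
  · obtain ⟨t, rfl⟩ : ∃ t, p = q + 3 * t := ⟨(p - q) / 3, by omega⟩
    exact ⟨_, .inl (bordA2_slCongr_of_shift 1 (-(q + 2 * t)) (-(q + t)) (.inl rfl)
      (by ring) (by ring))⟩
  · obtain ⟨t, rfl⟩ : ∃ t, p = q + 3 * t + 1 := ⟨(p - q) / 3, by omega⟩
    exact ⟨_, .inr (bordA2_slCongr_of_shift 1 (-(q + 2 * t + 1)) (-(q + t + 1)) (.inl rfl)
      (by ring) (by ring))⟩
  · -- negating `α₁, α₂` turns the coset of `(0, 1)` into that of `(0, -1)`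
    obtain ⟨t, rfl⟩ : ∃ t, p = q + 3 * t + 2 := ⟨(p - q) / 3, by omega⟩
    exact ⟨_, .inr (bordA2_slCongr_of_shift (-1) (-(q + 2 * t + 1)) (-(q + t)) (.inr rfl)
      (by ring) (by ring))⟩

/-- Every rank-3 positive definite integral lattice representing
`A₂` is isometric to `A₂ ⊥ ⟨a⟩` or to the lattice with Gram matrix
`[[2,-1,0],[-1,2,-1],[0,-1,a]]` for a suitable positive integer `a`; moreover all
these lattices are mutually non-isometric. -/
theorem A2_rank3_classification (L : QLat 3) (h : Represents L.1 (Agram 2)) :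
    (∃ a : ℤ, 0 < a ∧
      (Isom L.1 (sumGram (Agram 2) (Matrix.of fun _ _ : Fin 1 => a)) ∨
        Isom L.1 !![2, -1, 0; -1, 2, -1; 0, -1, a])) ∧
    (∀ a b : ℤ, 0 < a → 0 < b →
      ¬ Isom (sumGram (Agram 2) (Matrix.of fun _ _ : Fin 1 => a))
        !![2, -1, 0; -1, 2, -1; 0, -1, b]) ∧
    (∀ a b : ℤ, 0 < a → 0 < b → a ≠ b →
      ¬ Isom (sumGram (Agram 2) (Matrix.of fun _ _ : Fin 1 => a))
          (sumGram (Agram 2) (Matrix.of fun _ _ : Fin 1 => b)) ∧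
      ¬ Isom (!![2, -1, 0; -1, 2, -1; 0, -1, a] : Mat 3)
          !![2, -1, 0; -1, 2, -1; 0, -1, b]) := by
  simp only [sumGram_A2, ← bordA2.eq_def]
  refine ⟨?_, fun a b ha _ hiso => ?_, fun a b ha _ hab => ⟨fun hiso => ?_, fun hiso => ?_⟩⟩
  · obtain ⟨p, q, r, hU⟩ := exists_slCongr_bordA2 L.2.1 h
    obtain ⟨a, hV | hV⟩ := bordA2_slCongr_normalForm p q r
    · exact ⟨a, ((hU.trans hV).posDefInt L.2).diag_pos 2, .inl (hU.trans hV).isom⟩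
    · exact ⟨a, ((hU.trans hV).posDefInt L.2).diag_pos 2, .inr (hU.trans hV).isom⟩
  all_goals
    have hdet := hiso.det_eq (by rw [det_bordA2]; omega)
    rw [det_bordA2, det_bordA2] at hdet
    omega
end

section
/- Define M_c = (A₄ ⊥ ℤz) + ℤ([1] + z/5) with Q(z) = 25c − 20, and K_d = (A₄ ⊥ ℤw) + ℤ([2] + w/5) with Q(w) = 25d − 5, for positive integers c, d. Then the smallest positive integer c for which M_c is represented by K_d is c = 4d. -/
open Matrix

/-- Gram matrix of `M_c = (A₄ ⊥ ℤz) + ℤ([1] + z/5)` with `Q(z) = 25c - 20`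
(the norm of the glued vector is `c`). -/
def Mgram (c : ℤ) : Mat 5 := AGlue 4 1 c

/-- Gram matrix of `K_d = (A₄ ⊥ ℤw) + ℤ([2] + w/5)` with `Q(w) = 25d - 5`
(the norm of the glued vector is `d + 1`). -/
def Kgram (d : ℤ) : Mat 5 := AGlue 4 2 (d + 1)

theorem Kgram_eq (d : ℤ) : Kgram d =
    !![2,-1,0,0,0; -1,2,-1,0,0; 0,-1,2,-1,1; 0,0,-1,2,0; 0,0,1,0,d+1] := by
  ext i j
  fin_cases i <;> fin_cases j <;> rfl

theorem Mgram_eq (c : ℤ) : Mgram c =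
    !![2,-1,0,0,0; -1,2,-1,0,0; 0,-1,2,-1,0; 0,0,-1,2,1; 0,0,0,1,c] := by
  ext i j
  fin_cases i <;> fin_cases j <;> rfl

theorem Kgram_det (d : ℤ) : (Kgram d).det = 5*d - 1 := by
  rw [Kgram_eq]
  simp [Matrix.det_succ_row_zero, Fin.sum_univ_succ, Fin.succAbove, Fin.succ_ne_zero]
  ring

theorem Mgram_det (c : ℤ) : (Mgram c).det = 5*c - 4 := by
  rw [Mgram_eq]
  simp [Matrix.det_succ_row_zero, Fin.sum_univ_succ, Fin.succAbove, Fin.succ_ne_zero]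
  ring

set_option maxHeartbeats 1000000 in
theorem Kgram_represents_Mgram (d : ℤ) : Represents (Kgram d) (Mgram (4 * d)) := by
  refine ⟨!![1,0,0,0,0; -1,-1,0,0,0; 0,0,-1,0,0; 0,0,0,-1,0; -1,-2,-3,-2,2], ?_⟩
  rw [Kgram_eq, Mgram_eq]
  have hK : (!![2,-1,0,0,0; -1,2,-1,0,0; 0,-1,2,-1,1; 0,0,-1,2,0; 0,0,1,0,d+1] :
        Matrix (Fin 5) (Fin 5) ℤ)
      = !![2,-1,0,0,0; -1,2,-1,0,0; 0,-1,2,-1,1; 0,0,-1,2,0; 0,0,1,0,1]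
        + d • !![0,0,0,0,0; 0,0,0,0,0; 0,0,0,0,0; 0,0,0,0,0; 0,0,0,0,1] := by
    ext i j; fin_cases i <;> fin_cases j <;>
      simp [Matrix.vecHead, Matrix.vecTail, add_comm]
  have hM : (!![2,-1,0,0,0; -1,2,-1,0,0; 0,-1,2,-1,0; 0,0,-1,2,1; 0,0,0,1,4*d] :
        Matrix (Fin 5) (Fin 5) ℤ)
      = !![2,-1,0,0,0; -1,2,-1,0,0; 0,-1,2,-1,0; 0,0,-1,2,1; 0,0,0,1,0]
        + d • !![0,0,0,0,0; 0,0,0,0,0; 0,0,0,0,0; 0,0,0,0,0; 0,0,0,0,4] := by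
    ext i j; fin_cases i <;> fin_cases j <;>
      simp [Matrix.vecHead, Matrix.vecTail, mul_comm]
  rw [hK, hM, Matrix.mul_add, Matrix.add_mul, Matrix.mul_smul, Matrix.smul_mul]
  congr 1
  · decide
  · congr 1
    decide

set_option maxRecDepth 10000 in
/-- The smallest positive integer `c` for which `M_c` is
represented by `K_d` is `c = 4d`. -/
theorem least_Mc_in_Kd (d : ℤ) (hd : 0 < d) :
    IsLeast {c : ℤ | 0 < c ∧ Represents (Kgram d) (Mgram c)} (4 * d) := by
  constructor
  · exact ⟨by linarith, Kgram_represents_Mgram d⟩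
  · rintro c ⟨hc, T, hT⟩
    have hdet := congrArg Matrix.det hT
    rw [Matrix.det_mul, Matrix.det_mul, Matrix.det_transpose, Kgram_det, Mgram_det] at hdet
    set k := T.det with hk
    have heq : k ^ 2 * (5 * d - 1) = 5 * c - 4 := by ring_nf; ring_nf at hdet; linarith
    have h4 : 4 ≤ k ^ 2 := by
      by_contra h
      push_neg at h
      have hb1 : -1 ≤ k := by nlinarith
      have hb2 : k ≤ 1 := by nlinarith
      have hcase : k = -1 ∨ k = 0 ∨ k = 1 := by omega
      rcases hcase with h' | h' | h' <;> rw [h'] at heq <;> norm_num at heq <;> omega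
    nlinarith [mul_nonneg (by linarith : (0:ℤ) ≤ k ^ 2 - 4) (by linarith : (0:ℤ) ≤ 5 * d - 1)]
end

section
/- Let N be an additively indecomposable positive definite integral lattice of rank n > 1 and a any positive integer. Then {cls(N ⊥ ⟨a⟩)} is not an (n+1)-exceptional set: no integral lattice L satisfies E_{n+1}(L) = {cls(N ⊥ ⟨a⟩)}. -/
open Matrix

/-- `N` is additively indecomposable: any representation of `N` into an orthogonal
sum `M₁ ⊥ M₂` of positive definite integral lattices lands in one of the summands. -/
def AddIndec {n : ℕ} (N : QLat n) : Prop :=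
  ∀ (a b : ℕ) (M₁ : QLat a) (M₂ : QLat b) (T : Matrix (Fin n) (Fin (a + b)) ℤ),
    T * sumGram M₁.1 M₂.1 * T.transpose = N.1 →
    (∀ (i : Fin n) (j : Fin b), T i (finSumFinEquiv (Sum.inr j)) = 0) ∨
    (∀ (i : Fin n) (j : Fin a), T i (finSumFinEquiv (Sum.inl j)) = 0)



section Helpers

open Finset

/-- quadratic form as double sum -/
lemma quad_eq_sum {k : ℕ} (G : Mat k) (v : Fin k → ℤ) :
    v ⬝ᵥ G.mulVec v = ∑ i, ∑ j, v i * G i j * v j := by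
  simp [dotProduct, Matrix.mulVec, Finset.mul_sum, mul_assoc]

lemma triple_apply {u r : ℕ} (M : Matrix (Fin u) (Fin r) ℤ) (G : Mat r) (i j : Fin u) :
    (M * G * M.transpose) i j = ∑ k, ∑ l, M i k * G k l * M j l := by
  simp only [Matrix.mul_apply, Matrix.transpose_apply, Finset.sum_mul]
  rw [Finset.sum_comm]

lemma sumGram_apply_ll {a b : ℕ} (A : Mat a) (B : Mat b) (i j : Fin a) :
    sumGram A B (finSumFinEquiv (Sum.inl i)) (finSumFinEquiv (Sum.inl j)) = A i j := by
  simp [sumGram]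

lemma sumGram_apply_rr {a b : ℕ} (A : Mat a) (B : Mat b) (i j : Fin b) :
    sumGram A B (finSumFinEquiv (Sum.inr i)) (finSumFinEquiv (Sum.inr j)) = B i j := by
  simp [sumGram]

lemma sumGram_apply_lr {a b : ℕ} (A : Mat a) (B : Mat b) (i : Fin a) (j : Fin b) :
    sumGram A B (finSumFinEquiv (Sum.inl i)) (finSumFinEquiv (Sum.inr j)) = 0 := by
  simp [sumGram]

lemma sumGram_apply_rl {a b : ℕ} (A : Mat a) (B : Mat b) (i : Fin b) (j : Fin a) :
    sumGram A B (finSumFinEquiv (Sum.inr i)) (finSumFinEquiv (Sum.inl j)) = 0 := by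
  simp [sumGram]

lemma posdef_nonneg {k : ℕ} {G : Mat k} (hG : PosDefInt G) (v : Fin k → ℤ) :
    0 ≤ v ⬝ᵥ G.mulVec v := by
  by_cases h : v = 0
  · subst h; simp
  · exact (hG.2 v h).le

lemma one_posdef (m : ℕ) : PosDefInt (1 : Mat m) := by
  refine ⟨Matrix.isSymm_one, fun v hv => ?_⟩
  rw [Matrix.one_mulVec]
  obtain ⟨i, hi⟩ := Function.ne_iff.mp hv
  refine Finset.sum_pos' (fun j _ => mul_self_nonneg _) ⟨i, Finset.mem_univ i, ?_⟩
  exact mul_self_pos.mpr hi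

lemma scalar_posdef {c : ℤ} (hc : 0 < c) : PosDefInt (Matrix.of fun _ _ : Fin 1 => c) := by
  refine ⟨by ext i j; fin_cases i; fin_cases j; rfl, fun v hv => ?_⟩
  have hv0 : v 0 ≠ 0 := by
    intro h0
    apply hv
    funext k
    have : k = 0 := Subsingleton.elim k 0
    rw [this, h0]; rfl
  have : v ⬝ᵥ (Matrix.of fun _ _ : Fin 1 => c).mulVec v = c * (v 0 * v 0) := by
    simp [dotProduct, Matrix.mulVec]
    ring
  rw [this]
  exact mul_pos hc (mul_self_pos.mpr hv0)

end Helpers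

section Batch2

lemma sumGram_cc {a b : ℕ} (A : Mat a) (B : Mat b) (i j : Fin a) :
    sumGram A B (Fin.castAdd b i) (Fin.castAdd b j) = A i j := by simp [sumGram]

lemma sumGram_nn {a b : ℕ} (A : Mat a) (B : Mat b) (i j : Fin b) :
    sumGram A B (Fin.natAdd a i) (Fin.natAdd a j) = B i j := by simp [sumGram]

lemma sumGram_cn {a b : ℕ} (A : Mat a) (B : Mat b) (i : Fin a) (j : Fin b) :
    sumGram A B (Fin.castAdd b i) (Fin.natAdd a j) = 0 := by simp [sumGram]

lemma sumGram_nc {a b : ℕ} (A : Mat a) (B : Mat b) (i : Fin b) (j : Fin a) :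
    sumGram A B (Fin.natAdd a i) (Fin.castAdd b j) = 0 := by simp [sumGram]

lemma sumGram_isSymm {a b : ℕ} {A : Mat a} {B : Mat b} (hA : A.IsSymm) (hB : B.IsSymm) :
    (sumGram A B).IsSymm := by
  rw [Matrix.IsSymm]
  ext i j
  rw [Matrix.transpose_apply]
  obtain ⟨s, rfl⟩ : ∃ s, finSumFinEquiv s = i := ⟨_, Equiv.apply_symm_apply _ _⟩
  obtain ⟨t, rfl⟩ : ∃ t, finSumFinEquiv t = j := ⟨_, Equiv.apply_symm_apply _ _⟩
  have hA' : ∀ i j, A j i = A i j := fun i j => by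
    conv_rhs => rw [← hA]
    rfl
  have hB' : ∀ i j, B j i = B i j := fun i j => by
    conv_rhs => rw [← hB]
    rfl
  rcases s with i' | i' <;> rcases t with j' | j' <;>
    simp [sumGram_cc, sumGram_nn, sumGram_cn, sumGram_nc, hA', hB']

lemma quad_sumGram {a b : ℕ} (A : Mat a) (B : Mat b) (v : Fin (a + b) → ℤ) :
    v ⬝ᵥ (sumGram A B).mulVec v =
      (fun i => v (finSumFinEquiv (Sum.inl i))) ⬝ᵥ A.mulVec (fun i => v (finSumFinEquiv (Sum.inl i)))
      + (fun i => v (finSumFinEquiv (Sum.inr i))) ⬝ᵥ B.mulVec (fun i => v (finSumFinEquiv (Sum.inr i))) := by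
  rw [quad_eq_sum, quad_eq_sum, quad_eq_sum]
  rw [← Equiv.sum_comp finSumFinEquiv (fun i => ∑ j, v i * sumGram A B i j * v j)]
  have : ∀ i : Fin a ⊕ Fin b, (∑ j, v (finSumFinEquiv i) * sumGram A B (finSumFinEquiv i) j * v j)
      = ∑ j : Fin a ⊕ Fin b, v (finSumFinEquiv i) * sumGram A B (finSumFinEquiv i) (finSumFinEquiv j) * v (finSumFinEquiv j) := by
    intro i
    rw [← Equiv.sum_comp finSumFinEquiv (fun j => v (finSumFinEquiv i) * sumGram A B (finSumFinEquiv i) j * v j)]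
  simp only [this]
  rw [Fintype.sum_sum_type]
  congr 1
  · rw [Finset.sum_congr rfl fun i _ => by rw [Fintype.sum_sum_type]]
    simp [sumGram_cc, sumGram_cn]
  · rw [Finset.sum_congr rfl fun i _ => by rw [Fintype.sum_sum_type]]
    simp [sumGram_nn, sumGram_nc]

lemma sumGram_posdef {a b : ℕ} {A : Mat a} {B : Mat b} (hA : PosDefInt A) (hB : PosDefInt B) :
    PosDefInt (sumGram A B) := by
  refine ⟨sumGram_isSymm hA.1 hB.1, fun v hv => ?_⟩
  rw [quad_sumGram]
  set v1 : Fin a → ℤ := fun i => v (finSumFinEquiv (Sum.inl i)) with hv1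
  set v2 : Fin b → ℤ := fun i => v (finSumFinEquiv (Sum.inr i)) with hv2
  have hor : v1 ≠ 0 ∨ v2 ≠ 0 := by
    by_contra h
    push_neg at h
    apply hv
    funext k
    have := h.1
    have h2 := h.2
    rcases hk : finSumFinEquiv.symm k with i | i
    · have : v1 i = 0 := by rw [h.1]; rfl
      rw [hv1] at this
      simpa [← hk] using this
    · have : v2 i = 0 := by rw [h.2]; rfl
      rw [hv2] at this
      simpa [← hk] using this
  rcases hor with h | h
  · exact add_pos_of_pos_of_nonneg (hA.2 v1 h) (posdef_nonneg hB v2)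
  · exact add_pos_of_nonneg_of_pos (posdef_nonneg hA v1) (hB.2 v2 h)

lemma posdef_det_ne_zero {k : ℕ} {G : Mat k} (hG : PosDefInt G) : G.det ≠ 0 := by
  intro h
  obtain ⟨v, hv, hmul⟩ := (Matrix.exists_mulVec_eq_zero_iff).mpr h
  have := hG.2 v hv
  rw [hmul] at this
  simp at this

lemma det_sumGram {a b : ℕ} (A : Mat a) (B : Mat b) :
    (sumGram A B).det = A.det * B.det := by
  unfold sumGram
  rw [Matrix.det_reindex_self, Matrix.det_fromBlocks_zero₂₁]

lemma sumGram_one_one (m : ℕ) : sumGram (1 : Mat m) (1 : Mat 1) = (1 : Mat (m + 1)) := by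
  unfold sumGram
  rw [Matrix.fromBlocks_one]
  simp

end Batch2

section Batch3

lemma noRepByI {n : ℕ} (hn : 1 < n) (N : QLat n) (hN : AddIndec N) :
    ∀ (m : ℕ) (C : Matrix (Fin n) (Fin m) ℤ), C * C.transpose = N.1 → False := by
  intro m
  induction m with
  | zero =>
    intro C hC
    have h0 : C * C.transpose = 0 := by
      ext i j
      simp [Matrix.mul_apply]
    rw [h0] at hC
    have i0 : Fin n := ⟨0, by omega⟩
    have hv : (Pi.single i0 1 : Fin n → ℤ) ≠ 0 := by
      intro h
      have := congrFun h i0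
      simp at this
    have := N.2.2 (Pi.single i0 1) hv
    rw [← hC] at this
    simp at this
  | succ m ih =>
    intro C hC
    have heq : C * sumGram (1 : Mat m) (1 : Mat 1) * C.transpose = N.1 := by
      rw [sumGram_one_one, Matrix.mul_one]
      exact hC
    rcases hN m 1 ⟨1, one_posdef m⟩ ⟨1, one_posdef 1⟩ C heq with h | h
    · set C₀ : Matrix (Fin n) (Fin m) ℤ := Matrix.of fun i k => C i (Fin.castAdd 1 k) with hC₀
      apply ih C₀
      ext i j
      rw [← hC]
      simp only [Matrix.mul_apply, Matrix.transpose_apply]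
      rw [← Equiv.sum_comp finSumFinEquiv (fun k => C i k * C j k)]
      rw [Fintype.sum_sum_type]
      have h' : ∀ (i : Fin n) (k : Fin 1), C i (Fin.natAdd m k) = 0 := fun i k => by
        simpa using h i k
      simp [h', hC₀]
    · set c : Fin n → ℤ := fun i => C i (finSumFinEquiv (Sum.inr (0 : Fin 1))) with hc
      have houter : ∀ i j, N.1 i j = c i * c j := by
        intro i j
        rw [← hC]
        simp only [Matrix.mul_apply, Matrix.transpose_apply]
        rw [← Equiv.sum_comp finSumFinEquiv (fun k => C i k * C j k)]
        rw [Fintype.sum_sum_type]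
        have h' : ∀ (i : Fin n) (k : Fin m), C i (Fin.castAdd 1 k) = 0 := fun i k => by
          simpa using h i k
        simp [h', hc]
      have h01 : (⟨1, hn⟩ : Fin n) ≠ ⟨0, by omega⟩ := by
        intro hh
        have := congrArg Fin.val hh
        simp at this
      set i0 : Fin n := ⟨0, by omega⟩ with hi0
      set i1 : Fin n := ⟨1, hn⟩ with hi1
      by_cases hc0 : c i0 = 0
      · have hv : (Pi.single i0 1 : Fin n → ℤ) ≠ 0 := by
          intro hh
          have := congrFun hh i0
          simp at this
        have hpos := N.2.2 (Pi.single i0 1) hv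
        rw [quad_eq_sum] at hpos
        simp only [houter] at hpos
        simp [Pi.single_apply, Finset.mul_sum] at hpos
        rw [hc0] at hpos
        simp at hpos
      · have hne : i1 ≠ i0 := h01
        set v : Fin n → ℤ := fun k => (Pi.single i0 (c i1) : Fin n → ℤ) k - (Pi.single i1 (c i0) : Fin n → ℤ) k with hvdef
        have hv : v ≠ 0 := by
          intro hh
          have := congrFun hh i1
          simp [hvdef, Pi.single_apply, hne, hne.symm] at this
          exact hc0 this
        have hpos := N.2.2 v hv
        rw [quad_eq_sum] at hpos
        simp only [houter] at hpos
        have hfact : ∑ i, ∑ j, v i * (c i * c j) * v j = (∑ i, v i * c i) * (∑ j, c j * v j) := by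
          rw [Finset.sum_mul_sum]
          exact Finset.sum_congr rfl fun i _ => Finset.sum_congr rfl fun j _ => by ring
        have hzero : ∑ i, v i * c i = 0 := by
          simp only [hvdef, sub_mul, Finset.sum_sub_distrib]
          simp [Pi.single_apply, Finset.sum_ite_eq', mul_comm]
        rw [hfact, hzero] at hpos
        simp at hpos

end Batch3

section Batch4

lemma triple_apply2 {u w r : ℕ} (M : Matrix (Fin u) (Fin r) ℤ) (P : Matrix (Fin w) (Fin r) ℤ)
    (G : Mat r) (i : Fin u) (j : Fin w) :
    (M * G * P.transpose) i j = ∑ k, ∑ l, M i k * G k l * P j l := by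
  simp only [Matrix.mul_apply, Matrix.transpose_apply, Finset.sum_mul]
  rw [Finset.sum_comm]

def colGlue {u a b : ℕ} (C : Matrix (Fin u) (Fin a) ℤ) (D : Matrix (Fin u) (Fin b) ℤ) :
    Matrix (Fin u) (Fin (a + b)) ℤ :=
  Matrix.of fun i k => Sum.elim (C i) (D i) (finSumFinEquiv.symm k)

lemma colGlue_c {u a b : ℕ} (C : Matrix (Fin u) (Fin a) ℤ) (D : Matrix (Fin u) (Fin b) ℤ)
    (i : Fin u) (k : Fin a) : colGlue C D i (Fin.castAdd b k) = C i k := by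
  simp [colGlue]

lemma colGlue_n {u a b : ℕ} (C : Matrix (Fin u) (Fin a) ℤ) (D : Matrix (Fin u) (Fin b) ℤ)
    (i : Fin u) (k : Fin b) : colGlue C D i (Fin.natAdd a k) = D i k := by
  simp [colGlue]

lemma colGlue_mul {u a b : ℕ} (C : Matrix (Fin u) (Fin a) ℤ) (D : Matrix (Fin u) (Fin b) ℤ)
    (A : Mat a) (B : Mat b) :
    colGlue C D * sumGram A B * (colGlue C D).transpose
      = C * A * C.transpose + D * B * D.transpose := by
  ext i j
  rw [Matrix.add_apply, triple_apply2, triple_apply2, triple_apply2]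
  rw [← Equiv.sum_comp finSumFinEquiv
    (fun k => ∑ l, colGlue C D i k * sumGram A B k l * colGlue C D j l)]
  have inner : ∀ s : Fin a ⊕ Fin b,
      (∑ l, colGlue C D i (finSumFinEquiv s) * sumGram A B (finSumFinEquiv s) l * colGlue C D j l)
      = ∑ t : Fin a ⊕ Fin b, colGlue C D i (finSumFinEquiv s) *
          sumGram A B (finSumFinEquiv s) (finSumFinEquiv t) * colGlue C D j (finSumFinEquiv t) := by
    intro s
    rw [← Equiv.sum_comp finSumFinEquiv
      (fun l => colGlue C D i (finSumFinEquiv s) * sumGram A B (finSumFinEquiv s) l * colGlue C D j l)]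
  simp only [inner]
  rw [Fintype.sum_sum_type]
  congr 1
  · rw [Finset.sum_congr rfl fun s _ => by rw [Fintype.sum_sum_type]]
    simp [sumGram_cc, sumGram_cn, colGlue_c, colGlue_n]
  · rw [Finset.sum_congr rfl fun s _ => by rw [Fintype.sum_sum_type]]
    simp [sumGram_nn, sumGram_nc, colGlue_c, colGlue_n]

def rowGlue {u w r : ℕ} (X : Matrix (Fin u) (Fin r) ℤ) (V : Matrix (Fin w) (Fin r) ℤ) :
    Matrix (Fin (u + w)) (Fin r) ℤ :=
  Matrix.of fun k j => Sum.elim (fun i => X i j) (fun i => V i j) (finSumFinEquiv.symm k)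

lemma rowGlue_c {u w r : ℕ} (X : Matrix (Fin u) (Fin r) ℤ) (V : Matrix (Fin w) (Fin r) ℤ)
    (i : Fin u) (j : Fin r) : rowGlue X V (Fin.castAdd w i) j = X i j := by
  simp [rowGlue]

lemma rowGlue_n {u w r : ℕ} (X : Matrix (Fin u) (Fin r) ℤ) (V : Matrix (Fin w) (Fin r) ℤ)
    (i : Fin w) (j : Fin r) : rowGlue X V (Fin.natAdd u i) j = V i j := by
  simp [rowGlue]

lemma rowGlue_mul {u w r : ℕ} (X : Matrix (Fin u) (Fin r) ℤ) (V : Matrix (Fin w) (Fin r) ℤ)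
    (G : Mat r) (A : Mat u) (B : Mat w)
    (hA : X * G * X.transpose = A) (hB : V * G * V.transpose = B)
    (h1 : X * G * V.transpose = 0) (h2 : V * G * X.transpose = 0) :
    rowGlue X V * G * (rowGlue X V).transpose = sumGram A B := by
  ext k l
  obtain ⟨s, rfl⟩ : ∃ s, finSumFinEquiv s = k := ⟨_, Equiv.apply_symm_apply _ _⟩
  obtain ⟨t, rfl⟩ : ∃ t, finSumFinEquiv t = l := ⟨_, Equiv.apply_symm_apply _ _⟩
  rcases s with i | i <;> rcases t with j | j
  · have := congrFun (congrFun hA i) j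
    rw [triple_apply2] at this
    rw [triple_apply2]
    simp only [finSumFinEquiv_apply_left, finSumFinEquiv_apply_right, sumGram_cc, rowGlue_c]
    exact this.trans rfl
  · have := congrFun (congrFun h1 i) j
    rw [triple_apply2] at this
    rw [triple_apply2]
    simp only [finSumFinEquiv_apply_left, finSumFinEquiv_apply_right, sumGram_cn, rowGlue_c, rowGlue_n]
    simpa using this
  · have := congrFun (congrFun h2 i) j
    rw [triple_apply2] at this
    rw [triple_apply2]
    simp only [finSumFinEquiv_apply_left, finSumFinEquiv_apply_right, sumGram_nc, rowGlue_c, rowGlue_n]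
    simpa using this
  · have := congrFun (congrFun hB i) j
    rw [triple_apply2] at this
    rw [triple_apply2]
    simp only [finSumFinEquiv_apply_left, finSumFinEquiv_apply_right, sumGram_nn, rowGlue_n]
    exact this.trans rfl

lemma extract_left {u w r : ℕ} (T : Matrix (Fin (u + w)) (Fin r) ℤ) (G : Mat r)
    (A : Mat u) (B : Mat w) (hT : T * G * T.transpose = sumGram A B) :
    (Matrix.of fun i k => T (Fin.castAdd w i) k) * G *
      (Matrix.of fun i k => T (Fin.castAdd w i) k).transpose = A := by
  ext i j
  rw [triple_apply2]
  have := congrFun (congrFun hT (Fin.castAdd w i)) (Fin.castAdd w j)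
  rw [triple_apply2] at this
  rw [show (∑ k, ∑ l, (Matrix.of fun i k => T (Fin.castAdd w i) k) i k * G k l *
      (Matrix.of fun i k => T (Fin.castAdd w i) k) j l)
      = ∑ k, ∑ l, T (Fin.castAdd w i) k * G k l * T (Fin.castAdd w j) l from rfl]
  rw [this, sumGram_cc]

end Batch4

section Batch5

def CrossRep (G : Mat 2) : Prop :=
  ∃ (a b : ℕ) (M₁ : QLat a) (M₂ : QLat b) (T : Matrix (Fin 2) (Fin (a + b)) ℤ),
    T * sumGram M₁.1 M₂.1 * T.transpose = G ∧
    (∃ i j, T i (finSumFinEquiv (Sum.inr j)) ≠ 0) ∧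
    (∃ i j, T i (finSumFinEquiv (Sum.inl j)) ≠ 0)

lemma posdef_diag_pos {k : ℕ} {G : Mat k} (hG : PosDefInt G) (i : Fin k) : 0 < G i i := by
  have hv : (Pi.single i 1 : Fin k → ℤ) ≠ 0 := by
    intro h
    have := congrFun h i
    simp at this
  have h := hG.2 _ hv
  rw [quad_eq_sum] at h
  simpa [Pi.single_apply] using h

lemma posdef_conj {k : ℕ} {G : Mat k} (hG : PosDefInt G) (V V' : Mat k)
    (h1 : V * V' = 1) (h2 : V' * V = 1) : PosDefInt (V * G * V.transpose) := by
  constructor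
  · rw [Matrix.IsSymm, Matrix.transpose_mul, Matrix.transpose_mul,
      Matrix.transpose_transpose, hG.1, Matrix.mul_assoc]
  · intro v hv
    have key : v ⬝ᵥ (V * G * V.transpose).mulVec v
        = (Matrix.vecMul v V) ⬝ᵥ G.mulVec (Matrix.vecMul v V) := by
      rw [← Matrix.mulVec_mulVec, ← Matrix.mulVec_mulVec, Matrix.dotProduct_mulVec,
        Matrix.mulVec_transpose]
    rw [key]
    apply hG.2
    intro h0
    apply hv
    have : Matrix.vecMul (Matrix.vecMul v V) V' = 0 := by rw [h0]; simp
    rw [Matrix.vecMul_vecMul, h1, Matrix.vecMul_one] at this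
    exact this

lemma conj_conj {k : ℕ} (V U G : Mat k) (h : V * U = 1) :
    V * (U * G * U.transpose) * V.transpose = G := by
  have e1 : V * (U * G * U.transpose) * V.transpose
      = (V * U) * (G * (U.transpose * V.transpose)) := by
    simp only [Matrix.mul_assoc]
  rw [e1, ← Matrix.transpose_mul, h, Matrix.transpose_one, Matrix.mul_one, Matrix.one_mul]

lemma crossRep_conj {V V' H : Mat 2} (h1 : V * V' = 1) (h2 : V' * V = 1)
    (hH : CrossRep H) : CrossRep (V * H * V.transpose) := by
  obtain ⟨a, b, M₁, M₂, T, hT, ⟨i1, j1, hn1⟩, ⟨i2, j2, hn2⟩⟩ := hH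
  have col_kill : ∀ (k : Fin (a + b)), (∀ i, (V * T) i k = 0) → ∀ i, T i k = 0 := by
    intro k hz i
    have hz' : ∀ i', (V' * (V * T)) i' k = 0 := by
      intro i'
      rw [Matrix.mul_apply]
      simp [hz]
    rw [← Matrix.mul_assoc, h2, Matrix.one_mul] at hz'
    exact hz' i
  refine ⟨a, b, M₁, M₂, V * T, ?_, ?_, ?_⟩
  · rw [Matrix.transpose_mul, ← hT]
    simp only [Matrix.mul_assoc]
  · by_contra hcon
    push_neg at hcon
    exact hn1 (col_kill _ (fun i => hcon i j1) i1)
  · by_contra hcon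
    push_neg at hcon
    exact hn2 (col_kill _ (fun i => hcon i j2) i2)

lemma quad2 (G : Mat 2) (v : Fin 2 → ℤ) :
    v ⬝ᵥ G.mulVec v = v 0 * G 0 0 * v 0 + v 0 * G 0 1 * v 1
      + v 1 * G 1 0 * v 0 + v 1 * G 1 1 * v 1 := by
  rw [quad_eq_sum]
  simp only [Fin.sum_univ_two]
  ring

lemma vec2_cases {v : Fin 2 → ℤ} (hv : v ≠ 0) : v 0 ≠ 0 ∨ v 1 ≠ 0 := by
  by_contra h
  push_neg at h
  apply hv
  funext k
  fin_cases k
  · exact h.1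
  · exact h.2

end Batch5

section Batch6

lemma cross_of_posdef : ∀ (fuel : ℕ) (G : Mat 2), PosDefInt G →
    (G 0 0 + G 1 1).toNat ≤ fuel → CrossRep G := by
  intro fuel
  induction fuel with
  | zero =>
    intro G hG hm
    have h0 := posdef_diag_pos hG 0
    have h1 := posdef_diag_pos hG 1
    omega
  | succ fuel ih =>
    intro G hG hm
    have hq10 : G 1 0 = G 0 1 := by
      conv_lhs => rw [← hG.1]
      rfl
    have hppos : 0 < G 0 0 := posdef_diag_pos hG 0
    have hrpos : 0 < G 1 1 := posdef_diag_pos hG 1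
    set s : ℤ := if 0 ≤ G 0 1 then 1 else -1 with hs
    have hsq : s * G 0 1 = |G 0 1| := by
      rcases abs_cases (G 0 1) with ⟨h, h'⟩ | ⟨h, h'⟩
      · rw [h]
        have : s = 1 := by rw [hs, if_pos h']
        rw [this, one_mul]
      · rw [h]
        have : s = -1 := by rw [hs, if_neg (by omega)]
        rw [this]; ring
    have hs2 : s * s = 1 := by
      rcases le_or_gt 0 (G 0 1) with h | h
      · rw [hs, if_pos h]; ring
      · rw [hs, if_neg (by omega)]; ring
    have habs : 0 ≤ |G 0 1| := abs_nonneg _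
    by_cases hA : 2 * |G 0 1| > G 1 1
    · -- shear first basis vector
      set U : Mat 2 := Matrix.of ![![1, -s], ![0, 1]] with hU
      set V : Mat 2 := Matrix.of ![![1, s], ![0, 1]] with hV
      have hUV : U * V = 1 := by
        ext i j
        fin_cases i <;> fin_cases j <;>
          simp [hU, hV, Matrix.mul_apply, Fin.sum_univ_two, hs2]
      have hVU : V * U = 1 := by
        ext i j
        fin_cases i <;> fin_cases j <;>
          simp [hU, hV, Matrix.mul_apply, Fin.sum_univ_two, hs2]
      have posdef' := posdef_conj hG U V hUV hVU
      have hG'00 : (U * G * U.transpose) 0 0 = G 0 0 + G 1 1 - 2 * |G 0 1| := by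
        rw [triple_apply]
        simp only [Fin.sum_univ_two]
        simp [hU, hq10]
        nlinarith [hsq, hs2]
      have hG'11 : (U * G * U.transpose) 1 1 = G 1 1 := by
        rw [triple_apply]
        simp only [Fin.sum_univ_two]
        simp [hU]
      have hppos' : 0 < (U * G * U.transpose) 0 0 := posdef_diag_pos posdef' 0
      have hmeas : ((U * G * U.transpose) 0 0 + (U * G * U.transpose) 1 1).toNat ≤ fuel := by
        rw [hG'00, hG'11]
        rw [hG'00] at hppos'
        omega
      have hcross := ih (U * G * U.transpose) posdef' hmeas
      have hid : V * (U * G * U.transpose) * V.transpose = G := conj_conj V U G hVU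
      exact hid ▸ crossRep_conj hVU hUV hcross
    · by_cases hB : 2 * |G 0 1| > G 0 0
      · -- shear second basis vector
        set U : Mat 2 := Matrix.of ![![1, 0], ![-s, 1]] with hU
        set V : Mat 2 := Matrix.of ![![1, 0], ![s, 1]] with hV
        have hUV : U * V = 1 := by
          ext i j
          fin_cases i <;> fin_cases j <;>
            simp [hU, hV, Matrix.mul_apply, Fin.sum_univ_two, hs2]
        have hVU : V * U = 1 := by
          ext i j
          fin_cases i <;> fin_cases j <;>
            simp [hU, hV, Matrix.mul_apply, Fin.sum_univ_two, hs2]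
        have posdef' := posdef_conj hG U V hUV hVU
        have hG'00 : (U * G * U.transpose) 0 0 = G 0 0 := by
          rw [triple_apply]
          simp only [Fin.sum_univ_two]
          simp [hU]
        have hG'11 : (U * G * U.transpose) 1 1 = G 0 0 + G 1 1 - 2 * |G 0 1| := by
          rw [triple_apply]
          simp only [Fin.sum_univ_two]
          simp [hU, hq10]
          nlinarith [hsq, hs2]
        have hrpos' : 0 < (U * G * U.transpose) 1 1 := posdef_diag_pos posdef' 1
        have hmeas : ((U * G * U.transpose) 0 0 + (U * G * U.transpose) 1 1).toNat ≤ fuel := by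
          rw [hG'00, hG'11]
          rw [hG'11] at hrpos'
          omega
        have hcross := ih (U * G * U.transpose) posdef' hmeas
        have hid : V * (U * G * U.transpose) * V.transpose = G := conj_conj V U G hVU
        exact hid ▸ crossRep_conj hVU hUV hcross
      · push_neg at hA hB
        by_cases hqz : G 0 1 = 0
        · -- orthogonal split
          refine ⟨1, 1, ⟨Matrix.of fun _ _ => G 0 0, scalar_posdef hppos⟩,
            ⟨Matrix.of fun _ _ => G 1 1, scalar_posdef hrpos⟩,
            colGlue (Matrix.of fun i _ => if i = 0 then 1 else 0)
              (Matrix.of fun i _ => if i = 1 then 1 else 0), ?_, ?_, ?_⟩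
          · rw [colGlue_mul]
            ext i j
            fin_cases i <;> fin_cases j <;>
              simp [Matrix.mul_apply, Fin.sum_univ_one, hq10, hqz]
          · exact ⟨1, 0, by simp [colGlue]⟩
          · exact ⟨0, 0, by simp [colGlue]⟩
        · -- glue a unit vector
          have habs1 : 1 ≤ |G 0 1| := Int.one_le_abs (by simpa using hqz)
          have hp2 : 2 ≤ G 0 0 := by omega
          have hr2 : 2 ≤ G 1 1 := by omega
          have h4 : 4 * (G 0 1 * G 0 1) ≤ G 0 0 * G 1 1 := by
            have := mul_le_mul hB hA (by omega) (by omega)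
            nlinarith [abs_mul_abs_self (G 0 1)]
          have hdet : G 0 1 * G 0 1 < (G 0 0 - 1) * G 1 1 := by nlinarith
          have hsymm : ∀ i j, G j i = G i j := fun i j => by
            conv_lhs => rw [← hG.1]
            rfl
          have hG₂pos : PosDefInt (Matrix.of fun i j =>
              G i j - if i = 0 ∧ j = 0 then 1 else 0) := by
            constructor
            · ext i j
              rw [Matrix.transpose_apply]
              simp only [Matrix.of_apply, hsymm i j]
              by_cases hi : i = 0 <;> by_cases hj : j = 0 <;> simp [hi, hj, and_comm]
            · intro v hv
              rw [quad2]
              simp only [Matrix.of_apply]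
              norm_num [hq10]
              rcases vec2_cases hv with h | h
              · nlinarith [sq_nonneg (G 0 1 * v 0 + G 1 1 * v 1),
                  mul_pos (sub_pos.mpr hdet) (mul_self_pos.mpr h), hrpos]
              · nlinarith [sq_nonneg ((G 0 0 - 1) * v 0 + G 0 1 * v 1),
                  mul_pos (sub_pos.mpr hdet) (mul_self_pos.mpr h), hp2]
          refine ⟨1, 2, ⟨Matrix.of fun _ _ => 1, scalar_posdef one_pos⟩,
            ⟨Matrix.of fun i j => G i j - if i = 0 ∧ j = 0 then 1 else 0, hG₂pos⟩,
            colGlue (Matrix.of fun i _ => if i = 0 then 1 else 0) (1 : Mat 2), ?_, ?_, ?_⟩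
          · rw [colGlue_mul, Matrix.transpose_one, Matrix.mul_one, Matrix.one_mul]
            ext i j
            by_cases hi : i = (0 : Fin 2) <;> by_cases hj : j = (0 : Fin 2) <;>
              simp [Matrix.mul_apply, Fin.sum_univ_one, hi, hj]
          · exact ⟨0, 0, by simp [colGlue]⟩
          · exact ⟨0, 0, by simp [colGlue]⟩

lemma rank2_not_addIndec (N : QLat 2) : ¬ AddIndec N := by
  intro hInd
  obtain ⟨a, b, M₁, M₂, T, hT, ⟨i1, j1, hn1⟩, ⟨i2, j2, hn2⟩⟩ :=
    cross_of_posdef ((N.1 0 0 + N.1 1 1).toNat) N.1 N.2 le_rfl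
  rcases hInd a b M₁ M₂ T hT with h | h
  · exact hn1 (h i1 j1)
  · exact hn2 (h i2 j2)

end Batch6

section Batch7

lemma isom_det_eq {k : ℕ} {A B : Mat k} (h : Isom A B) (hA : A.det ≠ 0) :
    A.det = B.det := by
  obtain ⟨⟨T, hT⟩, ⟨S, hS⟩⟩ := h
  have h1 : B.det = T.det * A.det * T.det := by
    rw [← hT, Matrix.det_mul, Matrix.det_mul, Matrix.det_transpose]
  have h2 : A.det = S.det * B.det * S.det := by
    rw [← hS, Matrix.det_mul, Matrix.det_mul, Matrix.det_transpose]
  have e : A.det * 1 = A.det * (S.det * S.det * (T.det * T.det)) := by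
    rw [mul_one]
    nth_rewrite 1 [h2]
    rw [h1]
    ring
  have key : 1 = S.det * S.det * (T.det * T.det) := mul_left_cancel₀ hA e
  rcases Int.mul_eq_one_iff_eq_one_or_neg_one.mp key.symm with ⟨_, ht⟩ | ⟨_, ht⟩
  · rw [h1]
    linear_combination (-A.det) * ht
  · exfalso
    have := mul_self_nonneg T.det
    linarith

set_option maxHeartbeats 1000000 in
theorem orthsum_not_singleton_exceptional' (n : ℕ) (hn : 1 < n) (N : QLat n)
    (hN : AddIndec N) (a : ℤ) (ha : 0 < a) (P : QLat (n + 1))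
    (hP : P.1 = sumGram N.1 (Matrix.of fun _ _ : Fin 1 => a)) :
    ¬ ∃ (r : ℕ) (L : QLat r), ExcSet (n + 1) L = {cls P} := by
  rintro ⟨r, L, hExc⟩
  have hPmem : ¬ RepCls L (cls P) := by
    have : cls P ∈ ExcSet (n + 1) L := by rw [hExc]; rfl
    exact this
  have hrep : ∀ Q : QLat (n + 1), cls Q ≠ cls P → Represents L.1 Q.1 := by
    intro Q hne
    have hmem : cls Q ∉ ExcSet (n + 1) L := by
      rw [hExc]
      simpa using hne
    have hR : RepCls L (cls Q) := not_not.mp hmem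
    obtain ⟨N', hcls, hLN'⟩ := hR
    have hI : Isom N'.1 Q.1 := Quotient.exact hcls
    exact hLN'.trans' hI.1
  rcases lt_or_ge n 3 with h3 | h3
  · have hn2 : n = 2 := by omega
    subst hn2
    exact rank2_not_addIndec N hN
  · -- the identity lattice of rank n+1 is represented by L
    have hIne : cls (⟨(1 : Mat (n + 1)), one_posdef (n + 1)⟩ : QLat (n + 1)) ≠ cls P := by
      intro h
      have hI : Isom (1 : Mat (n + 1)) P.1 := Quotient.exact h
      obtain ⟨T, hT⟩ := hI.1
      rw [hP] at hT
      have hX := extract_left T (1 : Mat (n + 1)) N.1 (Matrix.of fun _ _ : Fin 1 => a) hT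
      rw [Matrix.mul_one] at hX
      exact noRepByI hn N hN (n + 1) _ hX
    obtain ⟨S, hS⟩ := hrep _ hIne
    have hS1 : S * L.1 * S.transpose = (1 : Mat (n + 1)) := hS
    have hdetN : N.1.det ≠ 0 := posdef_det_ne_zero N.2
    have hQne : cls (⟨sumGram N.1 (Matrix.of fun _ _ : Fin 1 => a + 1),
        sumGram_posdef N.2 (scalar_posdef (by omega))⟩ : QLat (n + 1)) ≠ cls P := by
      intro h
      have hI : Isom (sumGram N.1 (Matrix.of fun _ _ : Fin 1 => a + 1)) P.1 := Quotient.exact h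
      have hdq : (sumGram N.1 (Matrix.of fun _ _ : Fin 1 => a + 1)).det = N.1.det * (a + 1) := by
        rw [det_sumGram, Matrix.det_fin_one]
        rfl
      have hdp : P.1.det = N.1.det * a := by
        rw [hP, det_sumGram, Matrix.det_fin_one]
        rfl
      have heq : (sumGram N.1 (Matrix.of fun _ _ : Fin 1 => a + 1)).det = P.1.det :=
        isom_det_eq hI (by rw [hdq]; exact mul_ne_zero hdetN (by omega))
      rw [hdq, hdp] at heq
      have := mul_left_cancel₀ hdetN heq
      omega
    obtain ⟨T, hT⟩ := hrep _ hQne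
    have hT1 : T * L.1 * T.transpose = sumGram N.1 (Matrix.of fun _ _ : Fin 1 => a + 1) := hT
    set X : Matrix (Fin n) (Fin r) ℤ := Matrix.of fun i k => T (Fin.castAdd 1 i) k with hXdef
    have hXG : X * L.1 * X.transpose = N.1 :=
      extract_left T L.1 N.1 (Matrix.of fun _ _ : Fin 1 => a + 1) hT1
    set C : Matrix (Fin n) (Fin (n + 1)) ℤ := X * L.1 * S.transpose with hCdef
    set X' : Matrix (Fin n) (Fin r) ℤ := X - C * S with hX'def
    have hGsymm : L.1.transpose = L.1 := L.2.1
    have hSX : S * L.1 * X.transpose = C.transpose := by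
      rw [hCdef, Matrix.transpose_mul, Matrix.transpose_mul, Matrix.transpose_transpose,
        hGsymm, Matrix.mul_assoc]
    have hX'G : X' * L.1 * X'.transpose = N.1 - C * C.transpose := by
      rw [hX'def, Matrix.transpose_sub, Matrix.sub_mul, Matrix.mul_sub, Matrix.sub_mul,
        Matrix.sub_mul, Matrix.transpose_mul]
      have e1 : X * L.1 * (S.transpose * C.transpose) = C * C.transpose := by
        calc X * L.1 * (S.transpose * C.transpose) = (X * L.1 * S.transpose) * C.transpose := by
              simp only [Matrix.mul_assoc]
          _ = C * C.transpose := by rw [← hCdef]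
      have e2 : C * S * L.1 * X.transpose = C * C.transpose := by
        calc C * S * L.1 * X.transpose = C * (S * L.1 * X.transpose) := by
              simp only [Matrix.mul_assoc]
          _ = C * C.transpose := by rw [hSX]
      have e3 : C * S * L.1 * (S.transpose * C.transpose) = C * C.transpose := by
        calc C * S * L.1 * (S.transpose * C.transpose)
              = C * (S * L.1 * S.transpose) * C.transpose := by simp only [Matrix.mul_assoc]
          _ = C * C.transpose := by rw [hS1, Matrix.mul_one]
      rw [e1, e2, e3, hXG]
      abel
    have hEq : colGlue C X' * sumGram (1 : Mat (n + 1)) L.1 * (colGlue C X').transpose = N.1 := by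
      rw [colGlue_mul, Matrix.mul_one, hX'G, add_sub_cancel]
    rcases hN (n + 1) r ⟨1, one_posdef (n + 1)⟩ L (colGlue C X') hEq with hcase | hcase
    · have hX'0 : X' = 0 := by
        ext i k
        have := hcase i k
        rwa [finSumFinEquiv_apply_right, colGlue_n] at this
      have hCC : C * C.transpose = N.1 := by
        have h0 := hX'G
        rw [hX'0] at h0
        simp only [Matrix.zero_mul, Matrix.transpose_zero, Matrix.mul_zero] at h0
        have := sub_eq_zero.mp h0.symm
        exact this.symm
      exact noRepByI hn N hN (n + 1) C hCC
    · have hC0 : C = 0 := by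
        ext i j
        have := hcase i j
        rwa [finSumFinEquiv_apply_left, colGlue_c] at this
      have hXS : X * L.1 * S.transpose = 0 := by rw [← hCdef, hC0]
      obtain ⟨w0, w1, w2, w3, hw⟩ := Nat.sum_four_squares a.toNat
      set g : ℕ → ℤ := fun i => if i = 0 then (w0 : ℤ) else if i = 1 then (w1 : ℤ)
        else if i = 2 then (w2 : ℤ) else if i = 3 then (w3 : ℤ) else 0 with hg
      set W : Matrix (Fin 1) (Fin (n + 1)) ℤ := Matrix.of fun _ k => g k.val with hWdef
      have hWW : W * W.transpose = Matrix.of fun _ _ : Fin 1 => a := by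
        ext i j
        have hi : i = 0 := Subsingleton.elim _ _
        have hj : j = 0 := Subsingleton.elim _ _
        subst hi; subst hj
        rw [Matrix.mul_apply]
        have step1 : ∑ k : Fin (n + 1), W 0 k * W.transpose k 0
            = ∑ k : Fin (n + 1), g k.val * g k.val := rfl
        rw [step1, Fin.sum_univ_eq_sum_range (fun i => g i * g i) (n + 1)]
        have hsub : Finset.range 4 ⊆ Finset.range (n + 1) :=
          Finset.range_subset_range.mpr (by omega)
        rw [← Finset.sum_subset hsub (fun x _ hx => by
          have hx4 : 4 ≤ x := by
            by_contra hlt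
            exact hx (Finset.mem_range.mpr (by omega))
          have e0 : g x = 0 := by
            rw [hg]
            simp only
            rw [if_neg (by omega), if_neg (by omega), if_neg (by omega), if_neg (by omega)]
          rw [e0, mul_zero])]
        have : ∑ x ∈ Finset.range 4, g x * g x = (w0:ℤ)*w0 + w1*w1 + w2*w2 + w3*w3 := by
          rw [Finset.sum_range_succ, Finset.sum_range_succ, Finset.sum_range_succ,
            Finset.sum_range_one]
          norm_num [hg]
        rw [this]
        have : ((w0 ^ 2 + w1 ^ 2 + w2 ^ 2 + w3 ^ 2 : ℕ) : ℤ) = ((a.toNat : ℤ)) := by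
          exact_mod_cast congrArg (Nat.cast : ℕ → ℤ) hw
        rw [Int.toNat_of_nonneg ha.le] at this
        push_cast at this
        simp only [Matrix.of_apply]
        nlinarith [this]
      have hVV : (W * S) * L.1 * (W * S).transpose = Matrix.of fun _ _ : Fin 1 => a := by
        rw [Matrix.transpose_mul]
        have : W * S * L.1 * (S.transpose * W.transpose)
            = W * (S * L.1 * S.transpose) * W.transpose := by
          simp only [Matrix.mul_assoc]
        rw [this, hS1, Matrix.mul_one, hWW]
      have hXV : X * L.1 * (W * S).transpose = 0 := by
        rw [Matrix.transpose_mul, ← Matrix.mul_assoc, hXS, Matrix.zero_mul]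
      have hVX : (W * S) * L.1 * X.transpose = 0 := by
        calc (W * S) * L.1 * X.transpose = W * (S * L.1 * X.transpose) := by
              simp only [Matrix.mul_assoc]
          _ = 0 := by rw [hSX, hC0, Matrix.transpose_zero, Matrix.mul_zero]
      have hRepP : Represents L.1 P.1 := by
        refine ⟨rowGlue X (W * S), ?_⟩
        rw [hP]
        exact rowGlue_mul X (W * S) L.1 N.1 (Matrix.of fun _ _ : Fin 1 => a) hXG hVV hXV hVX
      exact hPmem ⟨P, rfl, hRepP⟩

end Batch7

/-- If `N` is additively indecomposable of rank `n > 1` and `a` is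
a positive integer, then `{cls (N ⊥ ⟨a⟩)}` is not an `(n+1)`-exceptional set. -/
theorem orthsum_not_singleton_exceptional (n : ℕ) (hn : 1 < n) (N : QLat n)
    (hN : AddIndec N) (a : ℤ) (ha : 0 < a) (P : QLat (n + 1))
    (hP : P.1 = sumGram N.1 (Matrix.of fun _ _ : Fin 1 => a)) :
    ¬ ∃ (r : ℕ) (L : QLat r), ExcSet (n + 1) L = {cls P} :=
  orthsum_not_singleton_exceptional' n hn N hN a ha P hP
end
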